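/- arXiv:math-ph/0511030 — 7 statements merged into one kernel-verified Lean document; each statement's English description precedes it below -/
import Mathlib

section
/- (Fermionic Bogolubov transformations) Let (Y, α) be an even-dimensional real Hilbert space and let φ be an irreducible representation of the CAR over (Y, α) on a complex Hilbert space H. Let r : Y → Y be an orthogonal transformation (a linear map preserving α). Then: (a) there exists a unitary operator U on H such that U φ(y) U* = φ(ry) for all y ∈ Y; (b) U is unique up to a phase factor: if U and U' both have this property, then there exists λ ∈ ℂ with |λ| = 1 and U' = λ U. -/
/-!
The unitarily implementable orthogonal maps form a subgroup of `O(Y)`, and by Cartan–Dieudonné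
`O(Y)` is generated by hyperplane reflections. For a unit vector `v` the unitary `φ v` implements
the reflection in the line `ℝ ∙ v`, which is minus the hyperplane reflection in `(ℝ ∙ v)ᗮ`. Over
an orthonormal basis `e` each `eⱼ` is negated by all but one of the line reflections in the `eᵢ`,
so their product is `-1` exactly when the dimension is even; then every hyperplane reflection is
implementable as well.

Uniqueness is Schur's lemma. The CAR say that `φ` extends to the Clifford algebra of `(Y, α)`,
which is finite-dimensional, so the orbit of a nonzero vector spans a finite-dimensional closed
invariant subspace and irreducibility makes `H` finite-dimensional. If `U` and `U'` implement the
same map, `star U * U'` commutes with every `φ y`, so each of its eigenspaces is invariant, hence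
all of `H`; it is a scalar, of modulus one because it is unitary.
-/

open Module Submodule

theorem commute_star_mul_of_conj_eq {R : Type*} [Monoid R] [StarMul R] {u v a b : R}
    (hu : u ∈ unitary R) (hv : v ∈ unitary R) (hua : u * a * star u = b)
    (hva : v * a * star v = b) : Commute (star u * v) a := by
  calc star u * v * a = star u * (v * a * star v) * v := by
        simp [mul_assoc, Unitary.star_mul_self_of_mem hv]
    _ = star u * (u * a * star u) * v := by rw [hva, hua]
    _ = a * (star u * v) := by simp [← mul_assoc, Unitary.star_mul_self_of_mem hu]

section Reflection
variable {Y : Type*} [NormedAddCommGroup Y] [InnerProductSpace ℝ Y]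

theorem list_prod_reflection_span_singleton_apply {ι : Type*} [DecidableEq ι] {e : ι → Y}
    (he : Orthonormal ℝ e) (l : List ι) (j : ι) :
    (l.map fun i => reflection (ℝ ∙ e i)).prod (e j) =
      (-1 : ℝ) ^ (l.length + l.count j) • e j := by
  induction l with
  | nil => simp
  | cons i l ih =>
    have hij : reflection (ℝ ∙ e i) (e j) = if i = j then e j else -e j := by
      rw [reflection_singleton_apply, he.1 i, orthonormal_iff_ite.mp he]
      split_ifs with h <;> simp [h, two_smul]
    simp only [List.map_cons, List.prod_cons, LinearIsometryEquiv.coe_mul, Function.comp_apply,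
      ih, map_smul, hij, List.count_cons, List.length_cons]
    by_cases h : i = j <;> simp [h, pow_succ, pow_add]

theorem list_prod_reflection_stdOrthonormalBasis_eq_neg [FiniteDimensional ℝ Y]
    (hdim : Even (finrank ℝ Y)) :
    ((List.finRange (finrank ℝ Y)).map fun i =>
      reflection (ℝ ∙ stdOrthonormalBasis ℝ Y i)).prod = LinearIsometryEquiv.neg ℝ := by
  refine LinearIsometryEquiv.toLinearEquiv_injective
    ((stdOrthonormalBasis ℝ Y).toBasis.ext' fun j => ?_)
  simp [list_prod_reflection_span_singleton_apply (stdOrthonormalBasis ℝ Y).orthonormal,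
    hdim.add_one.neg_one_pow]

end Reflection

section Irreducible
variable {H : Type*} [NormedAddCommGroup H]

theorem finiteDimensional_of_irreducible [NormedSpace ℂ H] {A : Type*} [Ring A] [Algebra ℝ A]
    [Module.Finite ℝ A] (ρ : A →ₐ[ℝ] (H →L[ℂ] H)) {ι : Type*} (a : ι → A)
    (hirr : ∀ S : Submodule ℂ H, IsClosed (S : Set H) →
      (∀ i, ∀ x ∈ S, ρ (a i) x ∈ S) → S = ⊥ ∨ S = ⊤) :
    FiniteDimensional ℂ H := by
  nontriviality H
  obtain ⟨x, hx⟩ := exists_ne (0 : H)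
  let orbit : A →ₗ[ℝ] H :=
    ((ContinuousLinearMap.apply ℂ H x).toLinearMap.restrictScalars ℝ) ∘ₗ ρ.toLinearMap
  obtain ⟨s, hs⟩ := fg_range orbit
  set S := span ℂ (LinearMap.range orbit : Set H)
  have hS : S = span ℂ s := by rw [← span_span_of_tower ℝ, hs]
  have hSfin : FiniteDimensional ℂ S := hS ▸ FiniteDimensional.span_finset ℂ s
  have hinv : ∀ i, ∀ y ∈ S, ρ (a i) y ∈ S := fun i y hy => by
    have hle : S ≤ S.comap (ρ (a i) : H →ₗ[ℂ] H) :=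
      span_le.mpr fun _ ⟨b, hb⟩ => hb ▸ subset_span ⟨a i * b, by simp [orbit]⟩
    exact hle hy
  rcases hirr S (closed_of_finiteDimensional S) hinv with hbot | htop
  · have hxS : x ∈ S := subset_span ⟨1, by simp [orbit]⟩
    exact absurd (by simpa [hbot] using hxS) hx
  · rw [htop] at hSfin
    exact Module.Finite.equiv topEquiv

theorem exists_eq_smul_one_of_commute [NormedSpace ℂ H] [FiniteDimensional ℂ H] {ι : Type*}
    (T : ι → H →L[ℂ] H)
    (hirr : ∀ S : Submodule ℂ H, IsClosed (S : Set H) →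
      (∀ i, ∀ x ∈ S, T i x ∈ S) → S = ⊥ ∨ S = ⊤)
    {W : H →L[ℂ] H} (hW : ∀ i, Commute W (T i)) : ∃ μ : ℂ, W = μ • 1 := by
  rcases subsingleton_or_nontrivial H with _ | _
  · exact ⟨0, Subsingleton.elim _ _⟩
  obtain ⟨μ, hμ⟩ := Module.End.exists_eigenvalue (W : Module.End ℂ H)
  set E := Module.End.eigenspace (W : Module.End ℂ H) μ
  have hinv : ∀ i, ∀ x ∈ E, T i x ∈ E := fun i x hx => by
    rw [Module.End.mem_eigenspace_iff] at hx ⊢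
    calc W (T i x) = T i (W x) := congr($(hW i) x)
      _ = μ • T i x := by rw [show W x = μ • x from hx, map_smul]
  have hE : E = ⊤ :=
    (hirr E (closed_of_finiteDimensional E) hinv).resolve_left (Module.End.hasEigenvalue_iff.mp hμ)
  refine ⟨μ, ContinuousLinearMap.ext fun x => ?_⟩
  have hx : x ∈ E := hE ▸ mem_top
  simpa using Module.End.mem_eigenspace_iff.mp hx

theorem exists_norm_eq_one_of_commute [InnerProductSpace ℂ H] [CompleteSpace H]
    [FiniteDimensional ℂ H] {ι : Type*} (T : ι → H →L[ℂ] H)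
    (hirr : ∀ S : Submodule ℂ H, IsClosed (S : Set H) →
      (∀ i, ∀ x ∈ S, T i x ∈ S) → S = ⊥ ∨ S = ⊤)
    {W : H →L[ℂ] H} (hWu : W ∈ unitary (H →L[ℂ] H)) (hW : ∀ i, Commute W (T i)) :
    ∃ μ : ℂ, ‖μ‖ = 1 ∧ W = μ • 1 := by
  rcases subsingleton_or_nontrivial H with _ | _
  · exact ⟨1, norm_one, Subsingleton.elim _ _⟩
  obtain ⟨μ, rfl⟩ := exists_eq_smul_one_of_commute T hirr hW
  obtain ⟨x, hx⟩ := exists_ne (0 : H)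
  have hnorm := Unitary.norm_map ⟨_, hWu⟩ x
  exact ⟨μ, by simpa [norm_smul, hx] using hnorm, rfl⟩

end Irreducible

noncomputable abbrev normSqForm (Y : Type*) [NormedAddCommGroup Y] [InnerProductSpace ℝ Y] :
    QuadraticForm ℝ Y :=
  LinearMap.BilinMap.toQuadraticMap (innerₗ Y)

instance {Y : Type*} [NormedAddCommGroup Y] [InnerProductSpace ℝ Y] [FiniteDimensional ℝ Y] :
    Module.Finite ℝ (CliffordAlgebra (normSqForm Y)) :=
  have := Module.Finite.of_basis (finBasis ℝ Y).ExteriorAlgebra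
  Module.Finite.equiv (CliffordAlgebra.equivExterior _).symm

section CAR
variable {Y : Type*} [NormedAddCommGroup Y] [InnerProductSpace ℝ Y]
  {H : Type*} [NormedAddCommGroup H] [InnerProductSpace ℂ H]
  (φ : Y →ₗ[ℝ] (H →L[ℂ] H))

section Relations
variable (hCAR : ∀ y₁ y₂, φ y₁ * φ y₂ + φ y₂ * φ y₁ =
  (2 * (inner ℝ y₁ y₂ : ℝ)) • (1 : H →L[ℂ] H))
include hCAR

theorem car_mul_self (y : Y) : φ y * φ y = (inner ℝ y y : ℝ) • (1 : H →L[ℂ] H) := by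
  have h := hCAR y y
  rw [← two_smul ℝ, mul_smul] at h
  exact smul_right_injective _ two_ne_zero h

theorem car_mul_self_of_norm_eq_one {v : Y} (hv : ‖v‖ = 1) : φ v * φ v = 1 := by
  rw [car_mul_self φ hCAR, real_inner_self_eq_norm_sq, hv, one_pow, one_smul]

theorem car_conj_eq_reflection {v : Y} (hv : ‖v‖ = 1) (z : Y) :
    φ v * φ z * φ v = φ (reflection (ℝ ∙ v) z) := by
  have hvz : φ v * φ z = (2 * inner ℝ v z) • 1 - φ z * φ v := eq_sub_of_add_eq (hCAR v z)
  rw [reflection_singleton_apply, hv, hvz, sub_mul, mul_assoc,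
    car_mul_self_of_norm_eq_one φ hCAR hv]
  simp [mul_smul, two_smul, add_mul]

theorem finiteDimensional_of_car_irreducible [FiniteDimensional ℝ Y]
    (hirr : ∀ S : Submodule ℂ H, IsClosed (S : Set H) →
      (∀ y, ∀ x ∈ S, φ y x ∈ S) → S = ⊥ ∨ S = ⊤) :
    FiniteDimensional ℂ H :=
  finiteDimensional_of_irreducible (CliffordAlgebra.lift (normSqForm Y)
      ⟨φ, fun y => by rw [Algebra.algebraMap_eq_smul_one]; exact car_mul_self φ hCAR y⟩)
    (CliffordAlgebra.ι _) (by simpa only [CliffordAlgebra.lift_ι_apply] using hirr)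

end Relations

variable [CompleteSpace H]

def unitarilyImplementable : Subgroup (Y ≃ₗᵢ[ℝ] Y) where
  carrier := {g | ∃ U ∈ unitary (H →L[ℂ] H), ∀ y, U * φ y * star U = φ (g y)}
  one_mem' := ⟨1, one_mem _, by simp⟩
  mul_mem' := by
    rintro g h ⟨U, hU, hUg⟩ ⟨V, hV, hVh⟩
    refine ⟨U * V, mul_mem hU hV, fun y => ?_⟩
    simp only [star_mul, LinearIsometryEquiv.coe_mul, Function.comp_apply, ← hUg, ← hVh]
    simp only [mul_assoc]
  inv_mem' := by
    rintro g ⟨U, hU, hUg⟩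
    refine ⟨star U, Unitary.star_mem hU, fun y => ?_⟩
    have hy : U * φ (g⁻¹ y) * star U = φ y := by rw [hUg]; simp
    rw [star_star, ← hy]
    simp only [← mul_assoc, Unitary.star_mul_self_of_mem hU, one_mul]
    simp only [mul_assoc, Unitary.star_mul_self_of_mem hU, mul_one]

variable (hCAR : ∀ y₁ y₂, φ y₁ * φ y₂ + φ y₂ * φ y₁ =
  (2 * (inner ℝ y₁ y₂ : ℝ)) • (1 : H →L[ℂ] H)) (hsa : ∀ y, IsSelfAdjoint (φ y))
include hCAR hsa

theorem reflection_span_singleton_mem_unitarilyImplementable_of_norm_eq_one {v : Y}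
    (hv : ‖v‖ = 1) : reflection (ℝ ∙ v) ∈ unitarilyImplementable φ := by
  refine ⟨φ v, ?_, fun z => ?_⟩
  · rw [Unitary.mem_iff, (hsa v).star_eq, car_mul_self_of_norm_eq_one φ hCAR hv]
    exact ⟨rfl, rfl⟩
  · rw [(hsa v).star_eq, car_conj_eq_reflection φ hCAR hv]

theorem neg_mem_unitarilyImplementable [FiniteDimensional ℝ Y] (hdim : Even (finrank ℝ Y)) :
    LinearIsometryEquiv.neg ℝ ∈ unitarilyImplementable φ := by
  rw [← list_prod_reflection_stdOrthonormalBasis_eq_neg hdim]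
  refine list_prod_mem fun g hg => ?_
  obtain ⟨i, -, rfl⟩ := List.mem_map.mp hg
  exact reflection_span_singleton_mem_unitarilyImplementable_of_norm_eq_one φ hCAR hsa
    ((stdOrthonormalBasis ℝ Y).orthonormal.1 i)

theorem reflection_span_singleton_mem_unitarilyImplementable [FiniteDimensional ℝ Y]
    (hdim : Even (finrank ℝ Y)) (v : Y) : reflection (ℝ ∙ v) ∈ unitarilyImplementable φ := by
  rcases eq_or_ne v 0 with rfl | hv
  · simpa using neg_mem_unitarilyImplementable φ hCAR hsa hdim
  · convert reflection_span_singleton_mem_unitarilyImplementable_of_norm_eq_one φ hCAR hsa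
      (norm_smul_inv_norm hv) using 2
    exact (span_singleton_smul_eq (inv_ne_zero (norm_ne_zero_iff.mpr hv)).isUnit v).symm

theorem unitarilyImplementable_eq_top [FiniteDimensional ℝ Y] (hdim : Even (finrank ℝ Y)) :
    unitarilyImplementable φ = ⊤ := by
  rw [eq_top_iff, ← LinearIsometryEquiv.reflections_generate, Subgroup.closure_le]
  rintro _ ⟨v, rfl⟩
  change (ℝ ∙ v)ᗮ.reflection ∈ unitarilyImplementable φ
  rw [reflection_orthogonal]
  exact mul_mem (neg_mem_unitarilyImplementable φ hCAR hsa hdim)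
    (reflection_span_singleton_mem_unitarilyImplementable φ hCAR hsa hdim v)

end CAR

/-- Fermionic Bogolubov transformations.
For an irreducible representation `φ` of the CAR over an even-dimensional real Hilbert
space `(Y, α)` and an orthogonal transformation `r` of `Y`, there is a unitary `U` with
`U φ(y) U* = φ(r y)` for all `y`, and `U` is unique up to a phase factor. -/
theorem fermionic_bogolubov_implementation
    {Y : Type*} [NormedAddCommGroup Y] [InnerProductSpace ℝ Y]
    [FiniteDimensional ℝ Y] (hdim : Even (Module.finrank ℝ Y))
    {H : Type*} [NormedAddCommGroup H] [InnerProductSpace ℂ H] [CompleteSpace H]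
    (φ : Y →ₗ[ℝ] (H →L[ℂ] H))
    (hsa : ∀ y, IsSelfAdjoint (φ y))
    (hCAR : ∀ y₁ y₂, φ y₁ * φ y₂ + φ y₂ * φ y₁ =
      (2 * (inner ℝ y₁ y₂ : ℝ)) • (1 : H →L[ℂ] H))
    (hirr : ∀ S : Submodule ℂ H, IsClosed (S : Set H) →
      (∀ y, ∀ x ∈ S, φ y x ∈ S) → S = ⊥ ∨ S = ⊤)
    (r : Y →ₗ[ℝ] Y)
    (hr : ∀ y₁ y₂ : Y, (inner ℝ (r y₁) (r y₂) : ℝ) = inner ℝ y₁ y₂) :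
    (∃ U : H →L[ℂ] H, U ∈ unitary (H →L[ℂ] H) ∧
      ∀ y : Y, U * φ y * star U = φ (r y)) ∧
    (∀ U U' : H →L[ℂ] H, U ∈ unitary (H →L[ℂ] H) → U' ∈ unitary (H →L[ℂ] H) →
      (∀ y : Y, U * φ y * star U = φ (r y)) →
      (∀ y : Y, U' * φ y * star U' = φ (r y)) →
      ∃ lam : ℂ, ‖lam‖ = 1 ∧ U' = lam • U) := by
  refine ⟨?_, fun U U' hU hU' hUr hU'r => ?_⟩
  · have hg : (r.isometryOfInner hr).toLinearIsometryEquiv rfl ∈ unitarilyImplementable φ :=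
      unitarilyImplementable_eq_top φ hCAR hsa hdim ▸ Subgroup.mem_top _
    exact hg
  · have := finiteDimensional_of_car_irreducible φ hCAR hirr
    obtain ⟨μ, hμ, hW⟩ := exists_norm_eq_one_of_commute φ hirr (mul_mem (Unitary.star_mem hU) hU')
      fun y => commute_star_mul_of_conj_eq hU hU' (hUr y) (hU'r y)
    refine ⟨μ, hμ, ?_⟩
    calc U' = U * (star U * U') := by rw [← mul_assoc, Unitary.mul_star_self_of_mem hU, one_mul]
      _ = μ • U := by simp [hW]
end

section
/- (A quasi-free representation of the CCR is regular) Let W be a representation of the CCR over (Y, ω) on a complex Hilbert space H. Suppose Ψ ∈ H is a unit vector which is cyclic (the linear span of {W(y)Ψ : y ∈ Y} is dense in H) and quasi-free: there is a symmetric positive bilinear form η on Y such that ⟨Ψ, W(y)Ψ⟩ = exp(−(1/4) η(y,y)) for all y ∈ Y. Then W is regular: for every y ∈ Y the map ℝ ∋ t ↦ W(ty) is strongly continuous. -/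
/-!
For a coherent vector `w = W z Ψ` the Weyl relations give
`⟪w, W (t • y) w⟫ = exp (-i t ω(y, z)) exp (-t² η(y, y) / 4)`, which is continuous in `t`.
Since `t ↦ W (t • y)` is a one-parameter group of unitaries,
`‖W (s • y) w - W (t • y) w‖² = 2 ‖w‖² - 2 Re ⟪w, W ((s - t) • y) w⟫`, so the orbit of `w` is
continuous. The vectors with continuous orbit form a subspace which is closed because the
`W (t • y)` are uniformly Lipschitz, and it contains the dense span of the coherent vectors.
-/

open Filter Topology

section OrbitContinuity

variable {𝕜 : Type*} [RCLike 𝕜] {H : Type*} [NormedAddCommGroup H] [InnerProductSpace 𝕜 H]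

theorem tendsto_of_tendsto_inner_of_norm_eq {ι : Type*} {l : Filter ι} {v : ι → H} {x : H}
    (hnorm : ∀ i, ‖v i‖ = ‖x‖)
    (hinner : Tendsto (fun i => (inner 𝕜 x (v i) : 𝕜)) l (𝓝 (inner 𝕜 x x))) :
    Tendsto v l (𝓝 x) := by
  have hdist : ∀ i, ‖v i - x‖ = √(2 * RCLike.re (inner 𝕜 x x - inner 𝕜 x (v i))) := by
    intro i
    rw [← Real.sqrt_sq (norm_nonneg _), @norm_sub_sq 𝕜, hnorm, map_sub, inner_re_symm (v i),
      inner_self_eq_norm_sq]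
    ring_nf
  have hlim : Tendsto (fun i => √(2 * RCLike.re (inner 𝕜 x x - inner 𝕜 x (v i)))) l
      (𝓝 √(2 * RCLike.re (inner 𝕜 x x - inner 𝕜 x x))) :=
    ((RCLike.continuous_re.tendsto _).comp (hinner.const_sub _)).const_mul 2 |>.sqrt
  rw [tendsto_iff_norm_sub_tendsto_zero]
  simpa only [hdist, sub_self, map_zero, mul_zero, Real.sqrt_zero] using hlim

theorem continuous_apply_of_continuousAt_inner {G : Type*} [AddCommGroup G] [TopologicalSpace G]
    [IsTopologicalAddGroup G] {U : G → H →L[𝕜] H} (hadd : ∀ s t, U (s + t) = U s * U t)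
    (hzero : U 0 = 1) (hiso : ∀ t v, ‖U t v‖ = ‖v‖) {x : H}
    (hx : ContinuousAt (fun t => (inner 𝕜 x (U t x) : 𝕜)) 0) :
    Continuous fun t => U t x := by
  have hx₀ : Tendsto (fun t => U t x) (𝓝 0) (𝓝 x) :=
    tendsto_of_tendsto_inner_of_norm_eq (fun t => hiso t x)
      (by simpa only [ContinuousAt, hzero, one_apply_eq_self] using hx)
  refine continuous_iff_continuousAt.2 fun t₀ => ?_
  have hshift : Tendsto (fun t => t - t₀) (𝓝 t₀) (𝓝 0) := by
    simpa using (continuous_sub_right t₀).tendsto t₀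
  rw [ContinuousAt, tendsto_iff_norm_sub_tendsto_zero]
  refine ((tendsto_iff_norm_sub_tendsto_zero.1 hx₀).comp hshift).congr fun t => ?_
  have hsplit : U t = U t₀ * U (t - t₀) := by rw [← hadd, add_sub_cancel]
  simp only [Function.comp_apply, hsplit, mul_apply_eq_comp, ← map_sub, hiso]

end OrbitContinuity

def continuousOrbits {R T E F : Type*} [Semiring R] [TopologicalSpace T] [AddCommMonoid E]
    [Module R E] [TopologicalSpace E] [AddCommMonoid F] [Module R F] [TopologicalSpace F]
    [ContinuousAdd F] [ContinuousConstSMul R F] (U : T → E →L[R] F) : Submodule R E where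
  carrier := {x | Continuous fun t => U t x}
  add_mem' {x y} hx hy := by
    change Continuous fun t => U t (x + y)
    simp only [map_add]
    exact hx.add hy
  zero_mem' := by simpa only [Set.mem_ofPred_eq, map_zero] using continuous_const
  smul_mem' c x hx := by
    change Continuous fun t => U t (c • x)
    simp only [map_smul]
    exact hx.const_smul c

theorem isClosed_continuousOrbits {R T E F : Type*} [Semiring R] [TopologicalSpace T]
    [SeminormedAddCommGroup E] [Module R E] [SeminormedAddCommGroup F] [Module R F]
    [ContinuousConstSMul R F] {U : T → E →L[R] F} {K : NNReal}
    (hU : ∀ t, LipschitzWith K (U t)) : IsClosed (continuousOrbits U : Set E) := by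
  have hequi : Equicontinuous fun t => ⇑(U t) :=
    (LipschitzWith.uniformEquicontinuous _ K hU).equicontinuous
  have hset : (continuousOrbits U : Set E) =
      ⋂ t₀, {x | Tendsto (fun t => U t x) (𝓝 t₀) (𝓝 (U t₀ x))} := by
    ext x
    simp only [Set.mem_iInter, Set.mem_ofPred_eq]
    exact continuous_iff_continuousAt
  rw [hset]
  exact isClosed_iInter fun t₀ => hequi.isClosed_setOfPred_tendsto (U t₀).continuous

section CCR

variable {Y : Type*} [AddCommGroup Y] [Module ℝ Y]
  {H : Type*} [NormedAddCommGroup H] [InnerProductSpace ℂ H] [CompleteSpace H]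

structure IsCCRRepresentation (ω : Y →ₗ[ℝ] Y →ₗ[ℝ] ℝ) (W : Y → H →L[ℂ] H) : Prop where
  mem_unitary : ∀ y, W y ∈ unitary (H →L[ℂ] H)
  mul_eq : ∀ y₁ y₂, W y₁ * W y₂ = Complex.exp (-(Complex.I / 2) * (ω y₁ y₂ : ℂ)) • W (y₁ + y₂)

namespace IsCCRRepresentation

variable {ω : Y →ₗ[ℝ] Y →ₗ[ℝ] ℝ} {W : Y → H →L[ℂ] H}

theorem map_zero (hW : IsCCRRepresentation ω W) : W 0 = 1 := by
  have hidem : W 0 * W 0 = W 0 := by simpa using hW.mul_eq 0 0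
  have hunit := Unitary.star_mul_self_of_mem (hW.mem_unitary 0)
  calc W 0 = star (W 0) * W 0 * W 0 := by rw [hunit, one_mul]
    _ = 1 := by rw [mul_assoc, hidem, hunit]

theorem mul_neg_self (hW : IsCCRRepresentation ω W) (hω : ω.IsAlt) (z : Y) :
    W z * W (-z) = 1 := by
  simpa [hω.self_eq_zero, hW.map_zero] using hW.mul_eq z (-z)

theorem star_eq (hW : IsCCRRepresentation ω W) (hω : ω.IsAlt) (z : Y) :
    star (W z) = W (-z) := by
  calc star (W z) = star (W z) * (W z * W (-z)) := by rw [hW.mul_neg_self hω, mul_one]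
    _ = W (-z) := by rw [← mul_assoc, Unitary.star_mul_self_of_mem (hW.mem_unitary z), one_mul]

theorem smul_mul_smul (hW : IsCCRRepresentation ω W) (hω : ω.IsAlt) (y : Y) (s t : ℝ) :
    W (s • y) * W (t • y) = W ((s + t) • y) := by
  simpa [hω.self_eq_zero, add_smul] using hW.mul_eq (s • y) (t • y)

theorem neg_mul_mul (hW : IsCCRRepresentation ω W) (hω : ω.IsAlt) (x z : Y) :
    W (-z) * W x * W z = Complex.exp (-Complex.I * ω x z) • W x := by
  have hphase : ω (-z) (x + z) = ω x z := by
    simp only [_root_.map_neg, _root_.map_add, LinearMap.neg_apply, hω.self_eq_zero, neg_zero,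
      add_zero, hω.neg]
  have hsum : -z + (x + z) = x := by abel
  rw [mul_assoc, hW.mul_eq x z, mul_smul_comm, hW.mul_eq, hsum, hphase, smul_smul,
    ← Complex.exp_add]
  ring_nf

theorem inner_apply_apply (hW : IsCCRRepresentation ω W) (hω : ω.IsAlt) (x z : Y) (v : H) :
    inner ℂ (W z v) (W x (W z v)) = Complex.exp (-Complex.I * ω x z) * inner ℂ v (W x v) := by
  rw [← ContinuousLinearMap.adjoint_inner_right, ← ContinuousLinearMap.star_eq_adjoint,
    hW.star_eq hω, ← mul_apply_eq_comp, ← mul_apply_eq_comp, hW.neg_mul_mul hω, smul_apply,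
    inner_smul_right]

end IsCCRRepresentation

end CCR

theorem quasifree_representation_is_regular_general
    {Y : Type*} [AddCommGroup Y] [Module ℝ Y]
    {H : Type*} [NormedAddCommGroup H] [InnerProductSpace ℂ H] [CompleteSpace H]
    (ω : Y →ₗ[ℝ] Y →ₗ[ℝ] ℝ)
    (hanti : ∀ y₁ y₂ : Y, ω y₁ y₂ = - ω y₂ y₁)
    (W : Y → (H →L[ℂ] H))
    (hunit : ∀ y, W y ∈ unitary (H →L[ℂ] H))
    (hWeyl : ∀ y₁ y₂ : Y, W y₁ * W y₂ =
      Complex.exp (-(Complex.I / 2) * (ω y₁ y₂ : ℂ)) • W (y₁ + y₂))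
    (η : Y →ₗ[ℝ] Y →ₗ[ℝ] ℝ)
    (Ψ : H)
    (hcyc : Dense ((Submodule.span ℂ (Set.range fun y : Y => W y Ψ) : Submodule ℂ H)
      : Set H))
    (hqf : ∀ y : Y, (inner ℂ Ψ (W y Ψ) : ℂ) = Complex.exp (-(η y y : ℂ) / 4)) :
    ∀ (y : Y) (x : H), Continuous fun t : ℝ => W (t • y) x := by
  intro y x
  have hW : IsCCRRepresentation ω W := ⟨hunit, hWeyl⟩
  have hω : ω.IsAlt := fun z => by linarith [hanti z z]
  have hiso : ∀ (t : ℝ) v, ‖W (t • y) v‖ = ‖v‖ := fun t =>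
    ContinuousLinearMap.norm_map_of_mem_unitary (hunit _)
  have hcoherent : ∀ z, Continuous fun t : ℝ => W (t • y) (W z Ψ) := by
    intro z
    refine continuous_apply_of_continuousAt_inner
      (fun s t => (hW.smul_mul_smul hω y s t).symm) (by simpa using hW.map_zero) hiso ?_
    simp only [hW.inner_apply_apply hω, hqf, map_smul, LinearMap.smul_apply, smul_eq_mul]
    fun_prop
  have hspan : Submodule.span ℂ (Set.range fun z => W z Ψ) ≤
      continuousOrbits fun t : ℝ => W (t • y) :=
    Submodule.span_le.2 (Set.range_subset_iff.2 hcoherent)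
  have hclosed := isClosed_continuousOrbits fun t : ℝ =>
    (AddMonoidHomClass.isometry_of_norm (W (t • y)) (hiso t)).lipschitz
  exact hclosed.closure_subset_iff.2 hspan (hcyc x)

/-- A quasi-free representation of the CCR is regular.
If a representation `W` of the CCR over `(Y, ω)` has a cyclic unit vector `Ψ` with
`⟨Ψ, W(y)Ψ⟩ = exp(−η(y,y)/4)` for a symmetric positive bilinear form `η`, then
`t ↦ W(t y)` is strongly continuous for every `y`. -/
theorem quasifree_representation_is_regular
    {Y : Type*} [AddCommGroup Y] [Module ℝ Y]
    {H : Type*} [NormedAddCommGroup H] [InnerProductSpace ℂ H] [CompleteSpace H]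
    (ω : Y →ₗ[ℝ] Y →ₗ[ℝ] ℝ)
    (hanti : ∀ y₁ y₂ : Y, ω y₁ y₂ = - ω y₂ y₁)
    (W : Y → (H →L[ℂ] H))
    (hunit : ∀ y, W y ∈ unitary (H →L[ℂ] H))
    (hWeyl : ∀ y₁ y₂ : Y, W y₁ * W y₂ =
      Complex.exp (-(Complex.I / 2) * (ω y₁ y₂ : ℂ)) • W (y₁ + y₂))
    (η : Y →ₗ[ℝ] Y →ₗ[ℝ] ℝ)
    (hsymm : ∀ y₁ y₂ : Y, η y₁ y₂ = η y₂ y₁)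
    (hpos : ∀ y : Y, 0 ≤ η y y)
    (Ψ : H) (hΨ : ‖Ψ‖ = 1)
    (hcyc : Dense ((Submodule.span ℂ (Set.range fun y : Y => W y Ψ) : Submodule ℂ H)
      : Set H))
    (hqf : ∀ y : Y, (inner ℂ Ψ (W y Ψ) : ℂ) = Complex.exp (-(η y y : ℂ) / 4)) :
    ∀ (y : Y) (x : H), Continuous fun t : ℝ => W (t • y) x :=
  quasifree_representation_is_regular_general ω hanti W hunit hWeyl η Ψ hcyc hqf
end

section
/- Let φ be a representation of the CAR over a real Hilbert space (Y, α) on a complex Hilbert space H, let Ψ ∈ H be a unit vector, and define ω(y₁,y₂) := (1/i)⟨Ψ, (φ(y₁)φ(y₂) − φ(y₂)φ(y₁))Ψ⟩ for y₁, y₂ ∈ Y. Then: (i) ω is a real-valued antisymmetric bilinear form on Y; (ii) ⟨Ψ, φ(y₁)φ(y₂)Ψ⟩ = α(y₁,y₂) + (i/2) ω(y₁,y₂) for all y₁, y₂ ∈ Y; (iii) |ω(y₁,y₂)| ≤ 2 α(y₁,y₁)^{1/2} α(y₂,y₂)^{1/2} for all y₁, y₂ ∈ Y. -/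
/-!
For self-adjoint `A`, `B` the numbers `⟪Ψ, A B Ψ⟫` and `⟪Ψ, B A Ψ⟫` are complex conjugates, so the
commutator expectation divided by `i` is twice the imaginary part of the two-point function and the
anticommutator expectation is twice its real part, which the CAR fix to `α(y₁, y₂)`. The same
relation with `y₁ = y₂` gives `‖φ(y)Ψ‖ = ‖y‖`, and the bound is Cauchy–Schwarz for
`⟪φ(y₁)Ψ, φ(y₂)Ψ⟫`.
-/

open ComplexConjugate

section Operators

variable {H : Type*} [NormedAddCommGroup H] [InnerProductSpace ℂ H]

theorem inner_smul_one_apply_of_norm_eq_one {Ψ : H} (hΨ : ‖Ψ‖ = 1) (c : ℝ) :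
    inner ℂ Ψ ((c • (1 : H →L[ℂ] H)) Ψ) = c := by
  rw [smul_apply, one_apply_eq_self, inner_smul_right_eq_smul, inner_self_eq_norm_sq_to_K, hΨ]
  simp

variable [CompleteSpace H] {A B : H →L[ℂ] H}

theorem conj_inner_apply_apply_of_isSelfAdjoint (hA : IsSelfAdjoint A) (hB : IsSelfAdjoint B)
    (Ψ : H) : conj (inner ℂ Ψ (A (B Ψ))) = inner ℂ Ψ (B (A Ψ)) := by
  rw [inner_conj_symm]
  exact (hA.isSymmetric _ _).trans (hB.isSymmetric _ _)

theorem inner_commutator_apply_div_I (hA : IsSelfAdjoint A) (hB : IsSelfAdjoint B) (Ψ : H) :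
    inner ℂ Ψ ((A * B - B * A) Ψ) / Complex.I = ((2 * (inner ℂ Ψ (A (B Ψ))).im : ℝ) : ℂ) := by
  rw [div_eq_iff Complex.I_ne_zero, sub_apply, inner_sub_right, mul_apply_eq_comp,
    mul_apply_eq_comp, ← conj_inner_apply_apply_of_isSelfAdjoint hA hB, Complex.sub_conj]

theorem norm_inner_apply_apply_le (hA : IsSelfAdjoint A) (Ψ : H) :
    ‖inner ℂ Ψ (A (B Ψ))‖ ≤ ‖A Ψ‖ * ‖B Ψ‖ := by
  have h : inner ℂ (A Ψ) (B Ψ) = inner ℂ Ψ (A (B Ψ)) := hA.isSymmetric _ _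
  exact h ▸ norm_inner_le_norm _ _

end Operators

section CAR

variable {Y : Type*} [NormedAddCommGroup Y] [InnerProductSpace ℝ Y]
  {H : Type*} [NormedAddCommGroup H] [InnerProductSpace ℂ H]

noncomputable def twoPointFunction (φ : Y →ₗ[ℝ] (H →L[ℂ] H)) (Ψ : H) : Y →ₗ[ℝ] Y →ₗ[ℝ] ℂ :=
  LinearMap.mk₂ ℝ (fun y₁ y₂ => inner ℂ Ψ (φ y₁ (φ y₂ Ψ)))
    (fun y₁ y₁' y₂ => by simp only [map_add, add_apply, inner_add_right])
    (fun c y₁ y₂ => by simp only [map_smul, smul_apply, inner_smul_right_eq_smul])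
    (fun y₁ y₂ y₂' => by simp only [map_add, add_apply, inner_add_right])
    (fun c y₁ y₂ => by
      simp only [map_smul, smul_apply, ContinuousLinearMap.map_smul_of_tower,
        inner_smul_right_eq_smul])

variable {φ : Y →ₗ[ℝ] (H →L[ℂ] H)} {Ψ : H}

theorem twoPointFunction_apply (y₁ y₂ : Y) :
    twoPointFunction φ Ψ y₁ y₂ = inner ℂ Ψ (φ y₁ (φ y₂ Ψ)) :=
  rfl

variable [CompleteSpace H] (hsa : ∀ y, IsSelfAdjoint (φ y))
  (hCAR : ∀ y₁ y₂, φ y₁ * φ y₂ + φ y₂ * φ y₁ = (2 * (inner ℝ y₁ y₂ : ℝ)) • (1 : H →L[ℂ] H))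
  (hΨ : ‖Ψ‖ = 1)
include hsa hCAR hΨ

theorem re_twoPointFunction (y₁ y₂ : Y) : (twoPointFunction φ Ψ y₁ y₂).re = inner ℝ y₁ y₂ := by
  have h := congrArg (fun T : H →L[ℂ] H => inner ℂ Ψ (T Ψ)) (hCAR y₁ y₂)
  simp only [inner_smul_one_apply_of_norm_eq_one hΨ, add_apply, mul_apply_eq_comp,
    inner_add_right, ← conj_inner_apply_apply_of_isSelfAdjoint (hsa y₁) (hsa y₂),
    Complex.add_conj] at h
  exact_mod_cast (mul_right_inj' two_ne_zero).mp (Complex.ofReal_injective h)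

theorem norm_apply_eq_norm (y : Y) : ‖φ y Ψ‖ = ‖y‖ := by
  have h : inner ℂ (φ y Ψ) (φ y Ψ) = twoPointFunction φ Ψ y y := (hsa y).isSymmetric _ _
  rw [← pow_left_inj₀ (norm_nonneg _) (norm_nonneg _) two_ne_zero, norm_sq_eq_re_inner (𝕜 := ℂ),
    h, RCLike.re_to_complex, re_twoPointFunction hsa hCAR hΨ, real_inner_self_eq_norm_sq]

theorem norm_twoPointFunction_le (y₁ y₂ : Y) : ‖twoPointFunction φ Ψ y₁ y₂‖ ≤ ‖y₁‖ * ‖y₂‖ := by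
  rw [← norm_apply_eq_norm hsa hCAR hΨ y₁, ← norm_apply_eq_norm hsa hCAR hΨ y₂]
  exact norm_inner_apply_apply_le (hsa y₁) Ψ

end CAR

/-- Two-point functions of a CAR representation.
For a representation `φ` of the CAR over a real Hilbert space `(Y, α)` and a unit vector
`Ψ`, the form `ω(y₁,y₂) := (1/i)⟨Ψ, [φ(y₁),φ(y₂)]Ψ⟩` is a real-valued antisymmetric
bilinear form, the two-point function is `⟨Ψ, φ(y₁)φ(y₂)Ψ⟩ = α(y₁,y₂) + (i/2)ω(y₁,y₂)`,
and `|ω(y₁,y₂)| ≤ 2 α(y₁,y₁)^{1/2} α(y₂,y₂)^{1/2}`. -/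
theorem car_two_point_function
    {Y : Type*} [NormedAddCommGroup Y] [InnerProductSpace ℝ Y]
    {H : Type*} [NormedAddCommGroup H] [InnerProductSpace ℂ H] [CompleteSpace H]
    (φ : Y →ₗ[ℝ] (H →L[ℂ] H))
    (hsa : ∀ y, IsSelfAdjoint (φ y))
    (hCAR : ∀ y₁ y₂, φ y₁ * φ y₂ + φ y₂ * φ y₁ =
      (2 * (inner ℝ y₁ y₂ : ℝ)) • (1 : H →L[ℂ] H))
    (Ψ : H) (hΨ : ‖Ψ‖ = 1)
    (Ω : Y → Y → ℂ)
    (hΩ : ∀ y₁ y₂ : Y, Ω y₁ y₂ =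
      (inner ℂ Ψ ((φ y₁ * φ y₂ - φ y₂ * φ y₁) Ψ) : ℂ) / Complex.I) :
    -- (i) ω is a real-valued antisymmetric bilinear form
    (∀ y₁ y₂ : Y, (Ω y₁ y₂).im = 0) ∧
    (∀ y₁ y₂ : Y, Ω y₁ y₂ = - Ω y₂ y₁) ∧
    (∀ y₁ y₂ y₃ : Y, Ω (y₁ + y₂) y₃ = Ω y₁ y₃ + Ω y₂ y₃) ∧
    (∀ (c : ℝ) (y₁ y₂ : Y), Ω (c • y₁) y₂ = (c : ℂ) * Ω y₁ y₂) ∧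
    (∀ y₁ y₂ y₃ : Y, Ω y₁ (y₂ + y₃) = Ω y₁ y₂ + Ω y₁ y₃) ∧
    (∀ (c : ℝ) (y₁ y₂ : Y), Ω y₁ (c • y₂) = (c : ℂ) * Ω y₁ y₂) ∧
    -- (ii) the two-point function
    (∀ y₁ y₂ : Y, (inner ℂ Ψ (φ y₁ (φ y₂ Ψ)) : ℂ) =
      ((inner ℝ y₁ y₂ : ℝ) : ℂ) + (Complex.I / 2) * Ω y₁ y₂) ∧
    -- (iii) the bound
    (∀ y₁ y₂ : Y, ‖Ω y₁ y₂‖ ≤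
      2 * Real.sqrt (inner ℝ y₁ y₁ : ℝ) * Real.sqrt (inner ℝ y₂ y₂ : ℝ)) := by
  have hΩ_eq (y₁ y₂ : Y) : Ω y₁ y₂ = ((2 * (twoPointFunction φ Ψ y₁ y₂).im : ℝ) : ℂ) :=
    (hΩ y₁ y₂).trans (inner_commutator_apply_div_I (hsa y₁) (hsa y₂) Ψ)
  refine ⟨fun y₁ y₂ => by rw [hΩ_eq, Complex.ofReal_im], fun y₁ y₂ => ?_, ?_, ?_, ?_, ?_,
    fun y₁ y₂ => ?_, fun y₁ y₂ => ?_⟩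
  · rw [hΩ_eq, hΩ_eq, twoPointFunction_apply, twoPointFunction_apply,
      ← conj_inner_apply_apply_of_isSelfAdjoint (hsa y₂) (hsa y₁), Complex.conj_im]
    push_cast
    ring
  · intro y₁ y₂ y₃; simp [hΩ_eq, mul_add]
  · intro c y₁ y₂; simp [hΩ_eq, mul_left_comm]
  · intro y₁ y₂ y₃; simp [hΩ_eq, mul_add]
  · intro c y₁ y₂; simp [hΩ_eq, mul_left_comm]
  · rw [← twoPointFunction_apply]
    apply Complex.ext <;> simp [hΩ_eq, re_twoPointFunction hsa hCAR hΨ]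
  · rw [hΩ_eq, Complex.norm_real, Real.norm_eq_abs, abs_mul, abs_two, ← norm_eq_sqrt_real_inner,
      ← norm_eq_sqrt_real_inner, mul_assoc]
    gcongr
    exact (Complex.abs_im_le_norm _).trans (norm_twoPointFunction_le hsa hCAR hΨ y₁ y₂)
end

section
/- Let Y be a real Hilbert space and let j be a bounded linear operator on Y which is orthogonal (preserves the inner product and is bijective) and satisfies j² = −1, and define the symplectic form ω(y₁,y₂) := ⟨j y₁, y₂⟩. Let Sp(Y) denote the group of bounded invertible linear operators r on Y with ω(ry₁, ry₂) = ω(y₁,y₂) for all y₁, y₂. Then: (i) for r ∈ Sp(Y), the operator j − r j r⁻¹ is Hilbert–Schmidt if and only if r j − j r is Hilbert–Schmidt; (ii) the set Sp₂(Y) := {r ∈ Sp(Y) : r j − j r is Hilbert–Schmidt} is a subgroup of Sp(Y): it contains the identity and is closed under products and inverses. -/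
/-!
Hilbert–Schmidt operators form a two-sided ideal of `B(Y)`. Closure under composition on the
right reduces to closure on the left through the adjoint, and `T ↦ T†` preserves the
Hilbert–Schmidt property because both `Σᵢ ‖T bᵢ‖²` and `Σₖ ‖T† cₖ‖²` are rearrangements of the
double sum `Σᵢₖ ⟪T bᵢ, cₖ⟫²`. Every claim is then an ideal membership, via the identities
`(j - r j r⁻¹) r = -(r j - j r)`, `(s r) j - j (s r) = s (r j - j r) + (s j - j s) r` and
`r⁻¹ j - j r⁻¹ = -r⁻¹ (r j - j r) r⁻¹`.
-/

/-- A bounded operator on a real Hilbert space is Hilbert–Schmidt if the sum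
`Σ_i ‖T e_i‖²` is finite for some Hilbert (orthonormal) basis `(e_i)`. -/
def IsHilbertSchmidt {Y : Type} [NormedAddCommGroup Y] [InnerProductSpace ℝ Y]
    (T : Y →L[ℝ] Y) : Prop :=
  ∃ (ι : Type) (b : HilbertBasis ι ℝ Y), Summable fun i => ‖T (b i)‖ ^ 2

/-- Membership in the symplectic group: `r` preserves `ω(y₁,y₂) = ⟨j y₁, y₂⟩`. -/
def IsSymplectic {Y : Type} [NormedAddCommGroup Y] [InnerProductSpace ℝ Y]
    (j : Y →L[ℝ] Y) (r : Y ≃L[ℝ] Y) : Prop :=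
  ∀ y₁ y₂ : Y, (inner ℝ (j (r y₁)) (r y₂) : ℝ) = inner ℝ (j y₁) y₂

open ContinuousLinearMap

section HilbertSchmidt

variable {Y : Type} [NormedAddCommGroup Y] [InnerProductSpace ℝ Y]

theorem HilbertBasis.hasSum_inner_sq {ι : Type} (b : HilbertBasis ι ℝ Y) (x : Y) :
    HasSum (fun i => inner ℝ x (b i) ^ 2) (‖x‖ ^ 2) := by
  simpa only [real_inner_comm x, sq, real_inner_self_eq_norm_sq] using
    b.hasSum_inner_mul_inner x x

theorem summable_norm_adjoint_apply_sq [CompleteSpace Y] {T : Y →L[ℝ] Y} {ι κ : Type}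
    (b : HilbertBasis ι ℝ Y) (c : HilbertBasis κ ℝ Y) (h : Summable fun i => ‖T (b i)‖ ^ 2) :
    Summable fun k => ‖adjoint T (c k)‖ ^ 2 := by
  have hdouble : Summable fun p : ι × κ => inner ℝ (T (b p.1)) (c p.2) ^ 2 :=
    (summable_prod_of_nonneg fun p => sq_nonneg (inner ℝ (T (b p.1)) (c p.2))).mpr
      ⟨fun i => (c.hasSum_inner_sq (T (b i))).summable,
        h.congr fun i => (c.hasSum_inner_sq (T (b i))).tsum_eq.symm⟩
  have hswap := (summable_prod_of_nonneg fun p : κ × ι =>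
    sq_nonneg (inner ℝ (T (b p.2)) (c p.1))).mp hdouble.prod_symm
  refine hswap.2.congr fun k => ?_
  rw [← (b.hasSum_inner_sq (adjoint T (c k))).tsum_eq]
  congr 1 with i
  rw [adjoint_inner_left, real_inner_comm]

theorem IsHilbertSchmidt.summable [CompleteSpace Y] {T : Y →L[ℝ] Y} (h : IsHilbertSchmidt T)
    {κ : Type} (c : HilbertBasis κ ℝ Y) : Summable fun k => ‖T (c k)‖ ^ 2 := by
  obtain ⟨ι, b, hb⟩ := h
  simpa only [adjoint_adjoint] using
    summable_norm_adjoint_apply_sq b c (summable_norm_adjoint_apply_sq b b hb)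

theorem IsHilbertSchmidt.adjoint [CompleteSpace Y] {T : Y →L[ℝ] Y} (h : IsHilbertSchmidt T) :
    IsHilbertSchmidt (ContinuousLinearMap.adjoint T) := by
  obtain ⟨ι, b, hb⟩ := h
  exact ⟨ι, b, summable_norm_adjoint_apply_sq b b hb⟩

theorem isHilbertSchmidt_zero [CompleteSpace Y] : IsHilbertSchmidt (0 : Y →L[ℝ] Y) := by
  obtain ⟨w, b, -⟩ := exists_hilbertBasis ℝ Y
  exact ⟨w, b, by simp⟩

theorem IsHilbertSchmidt.neg {T : Y →L[ℝ] Y} (h : IsHilbertSchmidt T) :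
    IsHilbertSchmidt (-T) := by
  obtain ⟨ι, b, hb⟩ := h
  exact ⟨ι, b, by simpa using hb⟩

theorem IsHilbertSchmidt.add [CompleteSpace Y] {S T : Y →L[ℝ] Y} (hS : IsHilbertSchmidt S)
    (hT : IsHilbertSchmidt T) : IsHilbertSchmidt (S + T) := by
  obtain ⟨ι, b, hb⟩ := hS
  refine ⟨ι, b, .of_nonneg_of_le (fun _ => sq_nonneg _) (fun i => ?_)
    ((hb.add (hT.summable b)).mul_left 2)⟩
  have := parallelogram_law_with_norm ℝ (S (b i)) (T (b i))
  rw [add_apply]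
  nlinarith [sq_nonneg ‖S (b i) - T (b i)‖]

theorem IsHilbertSchmidt.clm_comp {T : Y →L[ℝ] Y} (A : Y →L[ℝ] Y) (h : IsHilbertSchmidt T) :
    IsHilbertSchmidt (A ∘L T) := by
  obtain ⟨ι, b, hb⟩ := h
  refine ⟨ι, b, .of_nonneg_of_le (fun _ => sq_nonneg _) (fun i => ?_) (hb.mul_left (‖A‖ ^ 2))⟩
  rw [comp_apply, ← mul_pow]
  gcongr
  exact A.le_opNorm _

theorem IsHilbertSchmidt.comp_clm [CompleteSpace Y] {T : Y →L[ℝ] Y} (h : IsHilbertSchmidt T)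
    (A : Y →L[ℝ] Y) : IsHilbertSchmidt (T ∘L A) := by
  simpa only [← adjoint_comp, adjoint_adjoint] using
    (h.adjoint.clm_comp (ContinuousLinearMap.adjoint A)).adjoint

end HilbertSchmidt

section Commutator

variable {Y : Type} [NormedAddCommGroup Y] [InnerProductSpace ℝ Y] [CompleteSpace Y]

theorem isHilbertSchmidt_sub_conj_iff (j : Y →L[ℝ] Y) (r : Y ≃L[ℝ] Y) :
    IsHilbertSchmidt (j - (r : Y →L[ℝ] Y) ∘L j ∘L (r.symm : Y →L[ℝ] Y)) ↔
      IsHilbertSchmidt ((r : Y →L[ℝ] Y) ∘L j - j ∘L (r : Y →L[ℝ] Y)) := by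
  constructor
  · intro h
    have hr : (j - (r : Y →L[ℝ] Y) ∘L j ∘L (r.symm : Y →L[ℝ] Y)) ∘L (r : Y →L[ℝ] Y) =
        -((r : Y →L[ℝ] Y) ∘L j - j ∘L (r : Y →L[ℝ] Y)) := by
      ext x; simp
    simpa only [hr, neg_neg] using (h.comp_clm (r : Y →L[ℝ] Y)).neg
  · intro h
    have hr : ((r : Y →L[ℝ] Y) ∘L j - j ∘L (r : Y →L[ℝ] Y)) ∘L (r.symm : Y →L[ℝ] Y) =
        -(j - (r : Y →L[ℝ] Y) ∘L j ∘L (r.symm : Y →L[ℝ] Y)) := by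
      ext x; simp
    simpa only [hr, neg_neg] using (h.comp_clm (r.symm : Y →L[ℝ] Y)).neg

theorem IsHilbertSchmidt.commutator_trans {j : Y →L[ℝ] Y} {r s : Y ≃L[ℝ] Y}
    (hr : IsHilbertSchmidt ((r : Y →L[ℝ] Y) ∘L j - j ∘L (r : Y →L[ℝ] Y)))
    (hs : IsHilbertSchmidt ((s : Y →L[ℝ] Y) ∘L j - j ∘L (s : Y →L[ℝ] Y))) :
    IsHilbertSchmidt ((r.trans s : Y →L[ℝ] Y) ∘L j - j ∘L (r.trans s : Y →L[ℝ] Y)) := by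
  have hrs : (r.trans s : Y →L[ℝ] Y) ∘L j - j ∘L (r.trans s : Y →L[ℝ] Y) =
      (s : Y →L[ℝ] Y) ∘L ((r : Y →L[ℝ] Y) ∘L j - j ∘L (r : Y →L[ℝ] Y)) +
        ((s : Y →L[ℝ] Y) ∘L j - j ∘L (s : Y →L[ℝ] Y)) ∘L (r : Y →L[ℝ] Y) := by
    ext x; simp
  rw [hrs]
  exact (hr.clm_comp _).add (hs.comp_clm _)

theorem IsHilbertSchmidt.commutator_symm {j : Y →L[ℝ] Y} {r : Y ≃L[ℝ] Y}
    (hr : IsHilbertSchmidt ((r : Y →L[ℝ] Y) ∘L j - j ∘L (r : Y →L[ℝ] Y))) :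
    IsHilbertSchmidt ((r.symm : Y →L[ℝ] Y) ∘L j - j ∘L (r.symm : Y →L[ℝ] Y)) := by
  have hr' : (r.symm : Y →L[ℝ] Y) ∘L j - j ∘L (r.symm : Y →L[ℝ] Y) =
      -((r.symm : Y →L[ℝ] Y) ∘L ((r : Y →L[ℝ] Y) ∘L j - j ∘L (r : Y →L[ℝ] Y)) ∘L
        (r.symm : Y →L[ℝ] Y)) := by
    ext x; simp
  rw [hr']
  exact ((hr.comp_clm _).clm_comp _).neg

theorem isHilbertSchmidt_commutator_refl (j : Y →L[ℝ] Y) :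
    IsHilbertSchmidt ((ContinuousLinearEquiv.refl ℝ Y : Y →L[ℝ] Y) ∘L j -
      j ∘L (ContinuousLinearEquiv.refl ℝ Y : Y →L[ℝ] Y)) := by
  simpa using isHilbertSchmidt_zero

end Commutator

namespace IsSymplectic

variable {Y : Type} [NormedAddCommGroup Y] [InnerProductSpace ℝ Y] {j : Y →L[ℝ] Y}

theorem refl : IsSymplectic j (ContinuousLinearEquiv.refl ℝ Y) := fun _ _ => rfl

theorem trans {r s : Y ≃L[ℝ] Y} (hr : IsSymplectic j r) (hs : IsSymplectic j s) :
    IsSymplectic j (r.trans s) := fun _ _ => (hs _ _).trans (hr _ _)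

theorem symm {r : Y ≃L[ℝ] Y} (hr : IsSymplectic j r) : IsSymplectic j r.symm :=
  fun y₁ y₂ => by simpa using (hr (r.symm y₁) (r.symm y₂)).symm

end IsSymplectic

theorem sp2_is_a_group_general
    {Y : Type} [NormedAddCommGroup Y] [InnerProductSpace ℝ Y] [CompleteSpace Y]
    (j : Y →L[ℝ] Y) :
    (∀ r : Y ≃L[ℝ] Y, IsSymplectic j r →
      (IsHilbertSchmidt (j - (r : Y →L[ℝ] Y) ∘L j ∘L (r.symm : Y →L[ℝ] Y)) ↔
        IsHilbertSchmidt ((r : Y →L[ℝ] Y) ∘L j - j ∘L (r : Y →L[ℝ] Y)))) ∧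
    (IsSymplectic j (ContinuousLinearEquiv.refl ℝ Y) ∧
      IsHilbertSchmidt
        (((ContinuousLinearEquiv.refl ℝ Y : Y →L[ℝ] Y)) ∘L j -
          j ∘L (ContinuousLinearEquiv.refl ℝ Y : Y →L[ℝ] Y))) ∧
    (∀ r s : Y ≃L[ℝ] Y,
      IsSymplectic j r → IsHilbertSchmidt ((r : Y →L[ℝ] Y) ∘L j - j ∘L (r : Y →L[ℝ] Y)) →
      IsSymplectic j s → IsHilbertSchmidt ((s : Y →L[ℝ] Y) ∘L j - j ∘L (s : Y →L[ℝ] Y)) →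
      IsSymplectic j (r.trans s) ∧
        IsHilbertSchmidt
          ((r.trans s : Y →L[ℝ] Y) ∘L j - j ∘L (r.trans s : Y →L[ℝ] Y))) ∧
    (∀ r : Y ≃L[ℝ] Y,
      IsSymplectic j r → IsHilbertSchmidt ((r : Y →L[ℝ] Y) ∘L j - j ∘L (r : Y →L[ℝ] Y)) →
      IsSymplectic j r.symm ∧
        IsHilbertSchmidt
          ((r.symm : Y →L[ℝ] Y) ∘L j - j ∘L (r.symm : Y →L[ℝ] Y))) :=
  ⟨fun r _ => isHilbertSchmidt_sub_conj_iff j r,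
    ⟨.refl, isHilbertSchmidt_commutator_refl j⟩,
    fun _ _ hr hrHS hs hsHS => ⟨hr.trans hs, hrHS.commutator_trans hsHS⟩,
    fun _ hr hrHS => ⟨hr.symm, hrHS.commutator_symm⟩⟩

/-- The group `Sp₂(Y)`.
Let `j` be an orthogonal complex structure (`j² = −1`) on a real Hilbert space `Y` and
`ω(y₁,y₂) = ⟨j y₁, y₂⟩` the associated symplectic form.  Then for `r ∈ Sp(Y)`:
(i) `j − r j r⁻¹` is Hilbert–Schmidt iff `r j − j r` is; and (ii) the set `Sp₂(Y)` of
symplectic `r` with `r j − j r` Hilbert–Schmidt contains the identity and is closed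
under products and inverses. -/
theorem sp2_is_a_group
    {Y : Type} [NormedAddCommGroup Y] [InnerProductSpace ℝ Y] [CompleteSpace Y]
    (j : Y →L[ℝ] Y)
    (hj_orth : ∀ y₁ y₂ : Y, (inner ℝ (j y₁) (j y₂) : ℝ) = inner ℝ y₁ y₂)
    (hj_surj : Function.Surjective j)
    (hj2 : j ∘L j = -1) :
    (∀ r : Y ≃L[ℝ] Y, IsSymplectic j r →
      (IsHilbertSchmidt (j - (r : Y →L[ℝ] Y) ∘L j ∘L (r.symm : Y →L[ℝ] Y)) ↔
        IsHilbertSchmidt ((r : Y →L[ℝ] Y) ∘L j - j ∘L (r : Y →L[ℝ] Y)))) ∧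
    (IsSymplectic j (ContinuousLinearEquiv.refl ℝ Y) ∧
      IsHilbertSchmidt
        (((ContinuousLinearEquiv.refl ℝ Y : Y →L[ℝ] Y)) ∘L j -
          j ∘L (ContinuousLinearEquiv.refl ℝ Y : Y →L[ℝ] Y))) ∧
    (∀ r s : Y ≃L[ℝ] Y,
      IsSymplectic j r → IsHilbertSchmidt ((r : Y →L[ℝ] Y) ∘L j - j ∘L (r : Y →L[ℝ] Y)) →
      IsSymplectic j s → IsHilbertSchmidt ((s : Y →L[ℝ] Y) ∘L j - j ∘L (s : Y →L[ℝ] Y)) →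
      IsSymplectic j (r.trans s) ∧
        IsHilbertSchmidt
          ((r.trans s : Y →L[ℝ] Y) ∘L j - j ∘L (r.trans s : Y →L[ℝ] Y))) ∧
    (∀ r : Y ≃L[ℝ] Y,
      IsSymplectic j r → IsHilbertSchmidt ((r : Y →L[ℝ] Y) ∘L j - j ∘L (r : Y →L[ℝ] Y)) →
      IsSymplectic j r.symm ∧
        IsHilbertSchmidt
          ((r.symm : Y →L[ℝ] Y) ∘L j - j ∘L (r.symm : Y →L[ℝ] Y))) :=
  sp2_is_a_group_general j
end

section
/- Let V₁ and V₂ be closed subspaces of a (real or complex) Hilbert space H, and let p₁, p₂ be the orthogonal projections onto V₁ and V₂ respectively. Then (V₁ ∩ V₂) + (V₁^⊥ ∩ V₂^⊥) = ker(p₁ − p₂); that is, a vector z satisfies p₁ z = p₂ z if and only if z is the sum of a vector in V₁ ∩ V₂ and a vector in V₁^⊥ ∩ V₂^⊥. -/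
namespace Submodule

variable {𝕜 H : Type*} [RCLike 𝕜] [NormedAddCommGroup H] [InnerProductSpace 𝕜 H]
  {V : Submodule 𝕜 H}

theorem eq_of_sub_mem_orthogonal_of_sub_mem_orthogonal {x u w : H} (hu : u ∈ V)
    (hxu : x - u ∈ Vᗮ) (hw : w ∈ V) (hxw : x - w ∈ Vᗮ) : u = w := by
  have huw : u - w ∈ V ⊓ Vᗮ :=
    ⟨V.sub_mem hu hw, by simpa using Vᗮ.sub_mem hxw hxu⟩
  rwa [inf_orthogonal_eq_bot, mem_bot, sub_eq_zero] at huw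

theorem apply_add_eq_of_mem_of_mem_orthogonal {p : H → H}
    (hp : ∀ x, p x ∈ V ∧ x - p x ∈ Vᗮ) {u v : H} (hu : u ∈ V) (hv : v ∈ Vᗮ) :
    p (u + v) = u :=
  eq_of_sub_mem_orthogonal_of_sub_mem_orthogonal (hp _).1 (hp _).2 hu (by simpa using hv)

end Submodule

theorem ker_difference_of_projections_general
    {𝕜 : Type*} [RCLike 𝕜]
    {H : Type*} [NormedAddCommGroup H] [InnerProductSpace 𝕜 H]
    (V₁ V₂ : Submodule 𝕜 H)
    (p₁ p₂ : H →L[𝕜] H)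
    -- `p₁` is the orthogonal projection onto `V₁`
    (hp₁ : ∀ x : H, p₁ x ∈ V₁ ∧ x - p₁ x ∈ V₁ᗮ)
    -- `p₂` is the orthogonal projection onto `V₂`
    (hp₂ : ∀ x : H, p₂ x ∈ V₂ ∧ x - p₂ x ∈ V₂ᗮ) :
    ∀ z : H, p₁ z = p₂ z ↔
      ∃ u ∈ V₁ ⊓ V₂, ∃ v ∈ V₁ᗮ ⊓ V₂ᗮ, z = u + v := by
  intro z
  constructor
  · intro h
    exact ⟨p₁ z, ⟨(hp₁ z).1, h ▸ (hp₂ z).1⟩, z - p₁ z, ⟨(hp₁ z).2, h ▸ (hp₂ z).2⟩,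
      (add_sub_cancel _ _).symm⟩
  · rintro ⟨u, ⟨hu₁, hu₂⟩, v, ⟨hv₁, hv₂⟩, rfl⟩
    rw [Submodule.apply_add_eq_of_mem_of_mem_orthogonal hp₁ hu₁ hv₁,
      Submodule.apply_add_eq_of_mem_of_mem_orthogonal hp₂ hu₂ hv₂]

/-- For two closed subspaces `V₁, V₂` of a (real or complex) Hilbert space
with orthogonal projections `p₁, p₂`, one has
`(V₁ ∩ V₂) + (V₁^⊥ ∩ V₂^⊥) = ker (p₁ − p₂)`:
`p₁ z = p₂ z` iff `z = u + v` with `u ∈ V₁ ∩ V₂` and `v ∈ V₁^⊥ ∩ V₂^⊥`. -/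
theorem ker_difference_of_projections
    {𝕜 : Type*} [RCLike 𝕜]
    {H : Type*} [NormedAddCommGroup H] [InnerProductSpace 𝕜 H] [CompleteSpace H]
    (V₁ V₂ : Submodule 𝕜 H)
    (hV₁ : IsClosed (V₁ : Set H)) (hV₂ : IsClosed (V₂ : Set H))
    (p₁ p₂ : H →L[𝕜] H)
    -- `p₁` is the orthogonal projection onto `V₁`
    (hp₁ : ∀ x : H, p₁ x ∈ V₁ ∧ x - p₁ x ∈ V₁ᗮ)
    -- `p₂` is the orthogonal projection onto `V₂`
    (hp₂ : ∀ x : H, p₂ x ∈ V₂ ∧ x - p₂ x ∈ V₂ᗮ) :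
    ∀ z : H, p₁ z = p₂ z ↔
      ∃ u ∈ V₁ ⊓ V₂, ∃ v ∈ V₁ᗮ ⊓ V₂ᗮ, z = u + v :=
  ker_difference_of_projections_general V₁ V₂ p₁ p₂ hp₁ hp₂
end

section
/- Let V be a closed real subspace of a complex Hilbert space W (i.e., a closed subspace of W viewed as a real Hilbert space with inner product Re⟨·,·⟩). Let p and q be the (real-linear) orthogonal projections of W onto V and onto iV respectively, taken with respect to Re⟨·,·⟩, and let V^perp := {z ∈ W : Re⟨v, z⟩ = 0 for all v ∈ V}. Then: (1) V ∩ iV = {0} and V^perp ∩ iV^perp = {0} if and only if ker(p − q) = {0}; (2) V^perp ∩ iV = {0} if and only if ker(p + q − 1) = {0}. -/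
/-- The real orthogonal complement of a set in a complex Hilbert space:
`{z : ∀ v ∈ S, Re⟨v, z⟩ = 0}`. -/
def realPerp {W : Type*} [NormedAddCommGroup W] [InnerProductSpace ℂ W]
    (S : Set W) : Set W :=
  {z | ∀ v ∈ S, (inner ℂ v z : ℂ).re = 0}

/-- The set `iS = {i • v : v ∈ S}`. -/
def iSet {W : Type*} [NormedAddCommGroup W] [InnerProductSpace ℂ W]
    (S : Set W) : Set W :=
  (fun v => Complex.I • v) '' S

/-!
A real orthogonal projection onto `G` fixes exactly `G` and kills exactly `G^perp`. Hence if
`p z = q z`, this vector lies in `V ∩ iV`; once it vanishes, `z ∈ V^perp ∩ iV^perp`. If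
`p z + q z = z`, then `q z = z - p z ∈ V^perp ∩ iV`; once it vanishes, `z ∈ V ∩ iV^perp`.
Multiplication by `i` maps `V ∩ iV^perp` onto `V^perp ∩ iV`, since `Re⟨v, i z⟩ = -Re⟨i v, z⟩`.
-/

theorem Set.inter_eq_singleton_zero_iff {α : Type*} [Zero α] {S T : Set α} (hS : 0 ∈ S)
    (hT : 0 ∈ T) : S ∩ T = {0} ↔ ∀ z ∈ S, z ∈ T → z = 0 := by
  simp only [Set.eq_singleton_iff_unique_mem, Set.mem_inter_iff, and_imp]
  exact and_iff_right ⟨hS, hT⟩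

section RealPerp

variable {W : Type*} [NormedAddCommGroup W] [InnerProductSpace ℂ W]

theorem zero_mem_realPerp (S : Set W) : (0 : W) ∈ realPerp S :=
  fun v _ => by simp

theorem sub_mem_realPerp {S : Set W} {a b : W} (ha : a ∈ realPerp S) (hb : b ∈ realPerp S) :
    a - b ∈ realPerp S := fun v hv => by
  rw [inner_sub_right, Complex.sub_re, ha v hv, hb v hv, sub_zero]

theorem eq_zero_of_mem_realPerp_self {S : Set W} {x : W} (hx : x ∈ S) (h : x ∈ realPerp S) :
    x = 0 :=
  re_inner_self_nonpos (𝕜 := ℂ).mp (h x hx).le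

theorem re_inner_smul_I_right (v z : W) :
    (inner ℂ v (Complex.I • z)).re = -(inner ℂ (Complex.I • v) z).re := by
  simp

theorem smul_I_mem_realPerp_iff {S : Set W} {z : W} :
    Complex.I • z ∈ realPerp S ↔ z ∈ realPerp (iSet S) := by
  simp only [realPerp, iSet, Set.mem_ofPred_eq, Set.forall_mem_image, re_inner_smul_I_right,
    neg_eq_zero]

theorem inter_realPerp_iSet_eq_zero_iff {S : Set W} (hS : (0 : W) ∈ S) :
    S ∩ realPerp (iSet S) = {0} ↔ realPerp S ∩ iSet S = {0} := by
  have hiS : (0 : W) ∈ iSet S := ⟨0, hS, smul_zero _⟩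
  rw [Set.inter_eq_singleton_zero_iff hS (zero_mem_realPerp _),
    Set.inter_eq_singleton_zero_iff (zero_mem_realPerp _) hiS]
  constructor
  · rintro h _ hperp ⟨v, hv, rfl⟩
    rw [h v hv (smul_I_mem_realPerp_iff.mp hperp)]
    exact smul_zero _
  · intro h z hz hperp
    have hIz : Complex.I • z = 0 := h _ (smul_I_mem_realPerp_iff.mpr hperp) ⟨z, hz, rfl⟩
    exact (smul_eq_zero.mp hIz).resolve_left Complex.I_ne_zero

theorem coe_map_smul_I (G : AddSubgroup W) :
    (G.map (DistribSMul.toAddMonoidHom W Complex.I) : Set W) = iSet G :=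
  AddSubgroup.coe_map _ _

end RealPerp

def IsRealOrthProjection {W : Type*} [NormedAddCommGroup W] [InnerProductSpace ℂ W]
    (S : Set W) (P : W → W) : Prop :=
  ∀ x, P x ∈ S ∧ x - P x ∈ realPerp S

namespace IsRealOrthProjection

variable {W : Type*} [NormedAddCommGroup W] [InnerProductSpace ℂ W]
  {G H : AddSubgroup W} {P Q : W → W}

theorem apply_eq_self_iff (hP : IsRealOrthProjection G P) {x : W} : P x = x ↔ x ∈ G := by
  refine ⟨fun h => h ▸ (hP x).1, fun hx => ?_⟩
  have h : x - P x = 0 := eq_zero_of_mem_realPerp_self (G.sub_mem hx (hP x).1) (hP x).2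
  exact (sub_eq_zero.mp h).symm

theorem apply_eq_zero_iff (hP : IsRealOrthProjection G P) {x : W} :
    P x = 0 ↔ x ∈ realPerp (G : Set W) := by
  refine ⟨fun h => by simpa [h] using (hP x).2, fun hx => ?_⟩
  have hperp : P x ∈ realPerp (G : Set W) := by simpa using sub_mem_realPerp hx (hP x).2
  exact eq_zero_of_mem_realPerp_self (hP x).1 hperp

theorem ker_sub_trivial_iff (hP : IsRealOrthProjection G P) (hQ : IsRealOrthProjection H Q) :
    (∀ z, P z = Q z → z = 0) ↔
      (G : Set W) ∩ H = {0} ∧ realPerp (G : Set W) ∩ realPerp (H : Set W) = {0} := by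
  rw [Set.inter_eq_singleton_zero_iff G.zero_mem H.zero_mem,
    Set.inter_eq_singleton_zero_iff (zero_mem_realPerp _) (zero_mem_realPerp _)]
  constructor
  · intro h
    refine ⟨fun z hG hH => h z ?_, fun z hG hH => h z ?_⟩
    · rw [hP.apply_eq_self_iff.mpr hG, hQ.apply_eq_self_iff.mpr hH]
    · rw [hP.apply_eq_zero_iff.mpr hG, hQ.apply_eq_zero_iff.mpr hH]
  · rintro ⟨hmem, hperp⟩ z hz
    have hPz : P z = 0 := hmem _ (hP z).1 (hz ▸ (hQ z).1)
    exact hperp z (hP.apply_eq_zero_iff.mp hPz) (hQ.apply_eq_zero_iff.mp (hz ▸ hPz))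

theorem add_sub_id_ker_trivial_iff (hP : IsRealOrthProjection G P)
    (hQ : IsRealOrthProjection H Q) :
    (∀ z, P z + Q z = z → z = 0) ↔
      realPerp (G : Set W) ∩ H = {0} ∧ (G : Set W) ∩ realPerp (H : Set W) = {0} := by
  rw [Set.inter_eq_singleton_zero_iff (zero_mem_realPerp _) H.zero_mem,
    Set.inter_eq_singleton_zero_iff G.zero_mem (zero_mem_realPerp _)]
  constructor
  · intro h
    refine ⟨fun z hG hH => h z ?_, fun z hG hH => h z ?_⟩
    · rw [hP.apply_eq_zero_iff.mpr hG, hQ.apply_eq_self_iff.mpr hH, zero_add]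
    · rw [hP.apply_eq_self_iff.mpr hG, hQ.apply_eq_zero_iff.mpr hH, add_zero]
  · rintro ⟨hperpG, hperpH⟩ z hz
    have hQz : Q z = 0 := hperpG _ (eq_sub_of_add_eq' hz ▸ (hP z).2) (hQ z).1
    rw [hQz, add_zero] at hz
    exact hperpH z (hz ▸ (hP z).1) (hQ.apply_eq_zero_iff.mp hQz)

end IsRealOrthProjection

theorem real_subspace_projection_kernels_general
    {W : Type*} [NormedAddCommGroup W] [InnerProductSpace ℂ W]
    (V : Submodule ℝ W)
    (p q : W →L[ℝ] W)
    (hp : ∀ x : W, p x ∈ V ∧ x - p x ∈ realPerp (V : Set W))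
    (hq : ∀ x : W, q x ∈ iSet (V : Set W) ∧ x - q x ∈ realPerp (iSet (V : Set W))) :
    (((V : Set W) ∩ iSet (V : Set W) = {0} ∧
        realPerp (V : Set W) ∩ realPerp (iSet (V : Set W)) = {0}) ↔
      (∀ z : W, p z = q z → z = 0)) ∧
    ((realPerp (V : Set W) ∩ iSet (V : Set W) = {0}) ↔
      (∀ z : W, p z + q z = z → z = 0)) := by
  have hp' : IsRealOrthProjection (V.toAddSubgroup : Set W) p := hp
  have hq' : IsRealOrthProjection
      (V.toAddSubgroup.map (DistribSMul.toAddMonoidHom W Complex.I) : Set W) q := by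
    rwa [coe_map_smul_I]
  have hsub := hp'.ker_sub_trivial_iff hq'
  have hadd := hp'.add_sub_id_ker_trivial_iff hq'
  simp only [coe_map_smul_I, Submodule.coe_toAddSubgroup] at hsub hadd
  refine ⟨hsub.symm, ?_⟩
  rw [hadd, inter_realPerp_iSet_eq_zero_iff V.zero_mem, and_self]

/-- Let `V` be a closed real subspace of a complex Hilbert space `W`, `p`
and `q` the real-orthogonal projections onto `V` and `iV`.  Then
(1) `V ∩ iV = {0}` and `V^perp ∩ iV^perp = {0}` iff `ker (p − q) = {0}`;
(2) `V^perp ∩ iV = {0}` iff `ker (p + q − 1) = {0}`. -/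
theorem real_subspace_projection_kernels
    {W : Type*} [NormedAddCommGroup W] [InnerProductSpace ℂ W] [CompleteSpace W]
    (V : Submodule ℝ W) (hV : IsClosed (V : Set W))
    (p q : W →L[ℝ] W)
    (hp : ∀ x : W, p x ∈ V ∧ x - p x ∈ realPerp (V : Set W))
    (hq : ∀ x : W, q x ∈ iSet (V : Set W) ∧ x - q x ∈ realPerp (iSet (V : Set W))) :
    (((V : Set W) ∩ iSet (V : Set W) = {0} ∧
        realPerp (V : Set W) ∩ realPerp (iSet (V : Set W)) = {0}) ↔
      (∀ z : W, p z = q z → z = 0)) ∧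
    ((realPerp (V : Set W) ∩ iSet (V : Set W) = {0}) ↔
      (∀ z : W, p z + q z = z → z = 0)) :=
  real_subspace_projection_kernels_general V p q hp hq
end

section
/- Let V be a closed real subspace of a complex Hilbert space W, with real orthogonal complement V^perp := {z ∈ W : Re⟨v, z⟩ = 0 for all v ∈ V}. Define W₊ := V ∩ iV, W₋ := V^perp ∩ iV^perp, W₁ := the closure of (V ∩ iV^perp) + (iV ∩ V^perp), and W₀ := the orthogonal complement of W₊ + W₋ + W₁ in W. Then: (i) W₊, W₋, W₁, W₀ are closed complex subspaces of W, and W is their orthogonal direct sum W = W₊ ⊕ W₀ ⊕ W₁ ⊕ W₋; (ii) setting V₀ := V ∩ W₀ and V₁ := V ∩ iV^perp, one has V = W₊ ⊕ V₀ ⊕ V₁ (an orthogonal sum, with V ∩ W₋ = {0}); (iii) V₀ is in general position as a real subspace of W₀, i.e., within W₀ one has V₀ ∩ iV₀ = {0}, V₀^perp ∩ iV₀^perp = {0} and V₀^perp ∩ iV₀ = {0}, the real orthogonal complements being taken inside W₀. -/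
/-!
Regard `W` as a real Hilbert space. Multiplication by `I` is a real isometry with `I • I • x = -x`,
so `I • V` is closed with `(I • V)ᗮ = I • Vᗮ`; a real subspace stable under `I` is a complex
subspace, and real orthogonality of such subspaces already is complex orthogonality.
The pieces `W₊`, `W₀`, `W₁`, `W₋` are `I`-stable and pairwise orthogonal (`W₋` is `W₊` built from
`Vᗮ`), so successive orthogonal projections onto the closed pieces `W₊`, `W₋`, `W₁` split `W`, and
projections onto `W₊` and `V₁` split `V`. By this splitting of `V`, a vector of `W₀` orthogonal to
`V₀` is orthogonal to all of `V`. Hence `V₀ᗮ ∩ iV₀ᗮ ⊆ W₋` and `V₀ᗮ ∩ iV₀ ⊆ iV ∩ Vᗮ ⊆ W₁` inside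
`W₀`, while `V₀ ∩ iV₀ ⊆ W₊`; each of these pieces is orthogonal to `W₀`.
-/

open Complex Submodule
open scoped Pointwise InnerProductSpace

section Sup

variable {R M : Type*} [Semiring R] [AddCommMonoid M] [Module R M] {p q r s : Submodule R M}
  {x : M}

theorem Submodule.exists_add_add_of_mem_sup_sup (hx : x ∈ p ⊔ q ⊔ r) :
    ∃ a ∈ p, ∃ b ∈ q, ∃ c ∈ r, x = a + b + c := by
  obtain ⟨y, hy, c, hc, rfl⟩ := mem_sup.1 hx
  obtain ⟨a, ha, b, hb, rfl⟩ := mem_sup.1 hy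
  exact ⟨a, ha, b, hb, c, hc, rfl⟩

theorem Submodule.exists_add_add_add_of_mem_sup_sup_sup (hx : x ∈ p ⊔ q ⊔ r ⊔ s) :
    ∃ a ∈ p, ∃ b ∈ q, ∃ c ∈ r, ∃ d ∈ s, x = a + b + c + d := by
  obtain ⟨y, hy, d, hd, rfl⟩ := mem_sup.1 hx
  obtain ⟨a, ha, b, hb, c, hc, rfl⟩ := exists_add_add_of_mem_sup_sup hy
  exact ⟨a, ha, b, hb, c, hc, d, hd, rfl⟩

end Sup

section Orthogonal

variable {𝕜 E : Type*} [RCLike 𝕜] [NormedAddCommGroup E] [InnerProductSpace 𝕜 E]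

theorem Submodule.hasOrthogonalProjection_of_isClosed [CompleteSpace E] {K : Submodule 𝕜 E}
    (hK : IsClosed (K : Set E)) : K.HasOrthogonalProjection :=
  haveI := hK.completeSpace_coe
  inferInstance

theorem Submodule.sup_sup_orthogonal_inf_orthogonal_inf {A B U : Submodule 𝕜 E}
    [A.HasOrthogonalProjection] [B.HasOrthogonalProjection] (hA : A ≤ U) (hB : B ≤ U)
    (hAB : A ⟂ B) : A ⊔ B ⊔ Aᗮ ⊓ Bᗮ ⊓ U = U := by
  have hB' : B ≤ Aᗮ ⊓ U := le_inf (isOrtho_iff_le.1 hAB.symm) hB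
  calc A ⊔ B ⊔ Aᗮ ⊓ Bᗮ ⊓ U = A ⊔ (B ⊔ Bᗮ ⊓ (Aᗮ ⊓ U)) := by
        rw [sup_assoc, inf_assoc, inf_left_comm]
    _ = U := by
      rw [sup_orthogonal_inf_of_hasOrthogonalProjection hB',
        sup_orthogonal_inf_of_hasOrthogonalProjection hA]

theorem Submodule.eq_bot_of_le_of_le_orthogonal {K X : Submodule 𝕜 E} (h : X ≤ K)
    (h' : X ≤ Kᗮ) : X = ⊥ :=
  isOrtho_self.1 ((isOrtho_orthogonal_right K).mono h h')

end Orthogonal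

theorem realPerp_union {W : Type*} [NormedAddCommGroup W] [InnerProductSpace ℂ W] (S T : Set W) :
    realPerp (S ∪ T) = realPerp S ∩ realPerp T := by
  ext z
  simp only [realPerp, Set.mem_ofPred_eq, Set.mem_union, Set.mem_inter_iff, or_imp, forall_and]

theorem closure_setOf_add_eq {E : Type*} [AddCommGroup E] [TopologicalSpace E]
    [IsTopologicalAddGroup E] {R : Type*} [Semiring R] [Module R E] [ContinuousConstSMul R E] (p q : Submodule R E) :
    closure {z : E | ∃ a ∈ (p : Set E), ∃ b ∈ (q : Set E), z = a + b} =
      ((p ⊔ q).topologicalClosure : Set E) := by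
  rw [topologicalClosure_coe, coe_sup]
  congr 1
  ext z
  simp [Set.mem_add, eq_comm]

namespace CanonicalDecomposition

attribute [local instance] InnerProductSpace.complexToReal

variable {W : Type*} [NormedAddCommGroup W] [InnerProductSpace ℂ W]

theorem real_inner_I_smul_left (x y : W) : ⟪I • x, y⟫_ℝ = -⟪x, I • y⟫_ℝ := by
  simp [real_inner_eq_re_inner ℂ, inner_smul_left, inner_smul_right]

theorem mem_I_smul_iff {p : Submodule ℝ W} {x : W} : x ∈ I • p ↔ -(I • x) ∈ p := by
  rw [mem_smul_pointwise_iff_exists]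
  constructor
  · rintro ⟨v, hv, rfl⟩
    simpa [smul_smul] using hv
  · exact fun h => ⟨_, h, by simp [smul_smul]⟩

theorem I_smul_mem_of_mem_I_smul {p : Submodule ℝ W} {x : W} (hx : x ∈ I • p) : I • x ∈ p :=
  neg_neg (I • x) ▸ p.neg_mem (mem_I_smul_iff.1 hx)

theorem I_smul_mono {p q : Submodule ℝ W} (h : p ≤ q) : I • p ≤ I • q := fun _ hx =>
  mem_I_smul_iff.2 (h (mem_I_smul_iff.1 hx))

theorem orthogonal_I_smul (p : Submodule ℝ W) : (I • p)ᗮ = I • pᗮ := by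
  ext x
  rw [mem_I_smul_iff, mem_orthogonal, mem_orthogonal]
  simp [mem_smul_pointwise_iff_exists, real_inner_I_smul_left]

theorem isClosed_I_smul {p : Submodule ℝ W} (hp : IsClosed (p : Set W)) :
    IsClosed ((I • p : Submodule ℝ W) : Set W) := by
  rw [coe_pointwise_smul]
  exact hp.smul_of_ne_zero I_ne_zero

theorem I_smul_mem_inf_I_smul {p q : Submodule ℝ W} {x : W} (hx : x ∈ p ⊓ I • q) :
    I • x ∈ I • p ⊓ q :=
  ⟨smul_mem_pointwise_smul _ _ _ hx.1, I_smul_mem_of_mem_I_smul hx.2⟩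

def IsComplexSubspace (p : Submodule ℝ W) : Prop := ∀ x ∈ p, I • x ∈ p

namespace IsComplexSubspace

variable {p q : Submodule ℝ W}

theorem inf (hp : IsComplexSubspace p) (hq : IsComplexSubspace q) :
    IsComplexSubspace (p ⊓ q) := fun x hx => ⟨hp x hx.1, hq x hx.2⟩

theorem sup_of_I_smul_mem (hpq : ∀ x ∈ p, I • x ∈ q) (hqp : ∀ x ∈ q, I • x ∈ p) :
    IsComplexSubspace (p ⊔ q) := fun x hx => by
  obtain ⟨a, ha, b, hb, rfl⟩ := mem_sup.1 hx
  rw [smul_add, add_comm]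
  exact add_mem_sup (hqp b hb) (hpq a ha)

theorem orthogonal (hp : IsComplexSubspace p) : IsComplexSubspace pᗮ := fun x hx v hv => by
  have := hx _ (hp v hv)
  rwa [real_inner_I_smul_left, neg_eq_zero] at this

theorem topologicalClosure (hp : IsComplexSubspace p) :
    IsComplexSubspace p.topologicalClosure := fun _ hx =>
  Set.MapsTo.closure hp (continuous_const_smul I) hx

theorem exists_submodule_coe_eq (hp : IsComplexSubspace p) :
    ∃ Z : Submodule ℂ W, (Z : Set W) = p := by
  refine ⟨{ p.toAddSubmonoid with smul_mem' := fun c x hx => ?_ }, rfl⟩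
  have hc : c • x = c.re • x + c.im • I • x := by
    rw [RCLike.real_smul_eq_coe_smul (K := ℂ), RCLike.real_smul_eq_coe_smul (K := ℂ), smul_smul,
      ← add_smul]
    exact congrArg (· • x) (re_add_im c).symm
  rw [hc]
  exact p.add_mem (p.smul_mem _ hx) (p.smul_mem _ (hp x hx))

theorem inner_eq_zero (hp : IsComplexSubspace p) (hpq : p ⟂ q) {x y : W} (hx : x ∈ p)
    (hy : y ∈ q) : inner ℂ x y = 0 := by
  have hre : (inner ℂ x y).re = 0 := hpq.inner_eq hx hy
  have him : (inner ℂ (I • x) y).re = 0 := hpq.inner_eq (hp x hx) hy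
  rw [inner_smul_left, conj_I] at him
  exact Complex.ext hre (by simpa using him)

end IsComplexSubspace

variable (V : Submodule ℝ W)

-- `W₊ = plusPart V`, `W₋ = plusPart Vᗮ`, `W₁ = onePart V`, `W₀ = zeroPart V`, `V₁ = mixedPart V`.
noncomputable def plusPart : Submodule ℝ W := V ⊓ I • V

noncomputable def mixedPart : Submodule ℝ W := V ⊓ I • Vᗮ

noncomputable def onePart : Submodule ℝ W := (mixedPart V ⊔ I • V ⊓ Vᗮ).topologicalClosure

noncomputable def zeroPart : Submodule ℝ W := (plusPart V)ᗮ ⊓ (plusPart Vᗮ)ᗮ ⊓ (onePart V)ᗮ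

noncomputable def part : Fin 4 → Submodule ℝ W := ![plusPart V, zeroPart V, onePart V, plusPart Vᗮ]

theorem orthogonal_onePart : (onePart V)ᗮ = (mixedPart V)ᗮ ⊓ (I • V ⊓ Vᗮ)ᗮ := by
  rw [onePart, orthogonal_closure, inf_orthogonal]

theorem I_smul_inf_orthogonal_le_onePart : I • V ⊓ Vᗮ ≤ onePart V :=
  le_sup_right.trans (le_topologicalClosure _)

theorem isComplexSubspace_plusPart : IsComplexSubspace (plusPart V) := fun _ hx =>
  (I_smul_mem_inf_I_smul hx).symm

theorem isComplexSubspace_onePart : IsComplexSubspace (onePart V) :=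
  IsComplexSubspace.topologicalClosure <| .sup_of_I_smul_mem (fun _ hx => I_smul_mem_inf_I_smul hx)
    fun _ hx => (I_smul_mem_inf_I_smul (p := Vᗮ) (q := V) hx.symm).symm

theorem isComplexSubspace_zeroPart : IsComplexSubspace (zeroPart V) :=
  ((isComplexSubspace_plusPart V).orthogonal.inf (isComplexSubspace_plusPart Vᗮ).orthogonal).inf
    (isComplexSubspace_onePart V).orthogonal

theorem isComplexSubspace_part (i : Fin 4) : IsComplexSubspace (part V i) := by
  fin_cases i
  exacts [isComplexSubspace_plusPart V, isComplexSubspace_zeroPart V,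
    isComplexSubspace_onePart V, isComplexSubspace_plusPart Vᗮ]

theorem I_smul_isOrtho_I_smul_orthogonal : I • V ⟂ I • Vᗮ :=
  orthogonal_I_smul V ▸ isOrtho_orthogonal_right _

theorem plusPart_isOrtho_plusPart_orthogonal : plusPart V ⟂ plusPart Vᗮ :=
  (isOrtho_orthogonal_right V).mono inf_le_left inf_le_left

theorem plusPart_isOrtho_mixedPart : plusPart V ⟂ mixedPart V :=
  (I_smul_isOrtho_I_smul_orthogonal V).mono inf_le_right inf_le_right

theorem plusPart_isOrtho_onePart : plusPart V ⟂ onePart V := by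
  rw [isOrtho_iff_le, orthogonal_onePart, le_inf_iff, ← isOrtho_iff_le, ← isOrtho_iff_le]
  exact ⟨plusPart_isOrtho_mixedPart V, (isOrtho_orthogonal_right V).mono inf_le_left inf_le_right⟩

theorem plusPart_orthogonal_isOrtho_onePart : plusPart Vᗮ ⟂ onePart V := by
  rw [isOrtho_iff_le, orthogonal_onePart, le_inf_iff, ← isOrtho_iff_le, ← isOrtho_iff_le]
  exact ⟨(isOrtho_orthogonal_left V).mono inf_le_left inf_le_left,
    (I_smul_isOrtho_I_smul_orthogonal V).symm.mono inf_le_right inf_le_left⟩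

theorem zeroPart_le_orthogonal_plusPart : zeroPart V ≤ (plusPart V)ᗮ :=
  inf_le_left.trans inf_le_left

theorem zeroPart_le_orthogonal_plusPart_orthogonal : zeroPart V ≤ (plusPart Vᗮ)ᗮ :=
  inf_le_left.trans inf_le_right

theorem zeroPart_le_orthogonal_onePart : zeroPart V ≤ (onePart V)ᗮ := inf_le_right

theorem pairwise_isOrtho_part : Pairwise fun i j => part V i ⟂ part V j := by
  have h01 : plusPart V ⟂ zeroPart V :=
    isOrtho_comm.1 (isOrtho_iff_le.2 (zeroPart_le_orthogonal_plusPart V))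
  have h02 := plusPart_isOrtho_onePart V
  have h03 := plusPart_isOrtho_plusPart_orthogonal V
  have h12 : zeroPart V ⟂ onePart V := isOrtho_iff_le.2 (zeroPart_le_orthogonal_onePart V)
  have h13 : zeroPart V ⟂ plusPart Vᗮ :=
    isOrtho_iff_le.2 (zeroPart_le_orthogonal_plusPart_orthogonal V)
  have h23 := (plusPart_orthogonal_isOrtho_onePart V).symm
  intro i j hij
  fin_cases i <;> fin_cases j
  all_goals first
    | exact absurd rfl hij
    | assumption
    | exact h01.symm | exact h02.symm | exact h03.symm
    | exact h12.symm | exact h13.symm | exact h23.symm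

theorem inf_plusPart_orthogonal_eq_bot : V ⊓ plusPart Vᗮ = ⊥ :=
  eq_bot_of_le_of_le_orthogonal inf_le_left (inf_le_right.trans inf_le_left)

theorem inf_zeroPart_inf_I_smul_eq_bot : V ⊓ zeroPart V ⊓ I • (V ⊓ zeroPart V) = ⊥ :=
  eq_bot_of_le_of_le_orthogonal (K := plusPart V)
    (le_inf (inf_le_left.trans inf_le_left) (inf_le_right.trans (I_smul_mono inf_le_left)))
    (inf_le_left.trans (inf_le_right.trans (zeroPart_le_orthogonal_plusPart V)))

theorem isClosed_zeroPart : IsClosed (zeroPart V : Set W) :=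
  ((isClosed_orthogonal _).inter (isClosed_orthogonal _)).inter (isClosed_orthogonal _)

variable {V}

theorem isClosed_plusPart (hV : IsClosed (V : Set W)) : IsClosed (plusPart V : Set W) :=
  hV.inter (isClosed_I_smul hV)

theorem isClosed_mixedPart (hV : IsClosed (V : Set W)) : IsClosed (mixedPart V : Set W) :=
  hV.inter (isClosed_I_smul V.isClosed_orthogonal)

theorem isClosed_part (hV : IsClosed (V : Set W)) (i : Fin 4) : IsClosed (part V i : Set W) := by
  fin_cases i
  exacts [isClosed_plusPart hV, isClosed_zeroPart V, isClosed_topologicalClosure _,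
    isClosed_plusPart V.isClosed_orthogonal]

variable [CompleteSpace W]

theorem plusPart_sup_zeroPart_sup_onePart_sup (hV : IsClosed (V : Set W)) :
    plusPart V ⊔ zeroPart V ⊔ onePart V ⊔ plusPart Vᗮ = ⊤ := by
  have := hasOrthogonalProjection_of_isClosed (isClosed_plusPart hV)
  have := hasOrthogonalProjection_of_isClosed (isClosed_plusPart V.isClosed_orthogonal)
  have : (onePart V).HasOrthogonalProjection :=
    hasOrthogonalProjection_of_isClosed (isClosed_topologicalClosure _)
  have h₁ := sup_sup_orthogonal_inf_orthogonal_inf le_top le_top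
    (plusPart_isOrtho_plusPart_orthogonal V)
  have h₂ := sup_orthogonal_inf_of_hasOrthogonalProjection (K₁ := onePart V)
    (le_inf (plusPart_isOrtho_onePart V).symm (plusPart_orthogonal_isOrtho_onePart V).symm)
  rw [inf_top_eq, ← h₂] at h₁
  rw [← h₁, zeroPart]
  ac_rfl

theorem plusPart_sup_inf_zeroPart_sup_mixedPart (hV : IsClosed (V : Set W)) :
    plusPart V ⊔ V ⊓ zeroPart V ⊔ mixedPart V = V := by
  have := hasOrthogonalProjection_of_isClosed (isClosed_plusPart hV)
  have := hasOrthogonalProjection_of_isClosed (isClosed_mixedPart hV)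
  have hV_le : V ≤ (plusPart Vᗮ)ᗮ ⊓ (I • V ⊓ Vᗮ)ᗮ :=
    le_inf (isOrtho_iff_le.1 ((isOrtho_orthogonal_right V).mono_right inf_le_left))
      (isOrtho_iff_le.1 ((isOrtho_orthogonal_right V).mono_right inf_le_right))
  have hrest : (plusPart V)ᗮ ⊓ (mixedPart V)ᗮ ⊓ V ≤ V ⊓ zeroPart V := by
    refine le_inf inf_le_right (le_inf (le_inf (inf_le_left.trans inf_le_left) ?_) ?_)
    · exact inf_le_right.trans (hV_le.trans inf_le_left)
    · rw [orthogonal_onePart]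
      exact le_inf (inf_le_left.trans inf_le_right) (inf_le_right.trans (hV_le.trans inf_le_right))
  refine le_antisymm (sup_le (sup_le inf_le_left inf_le_left) inf_le_left) ?_
  calc V = plusPart V ⊔ mixedPart V ⊔ (plusPart V)ᗮ ⊓ (mixedPart V)ᗮ ⊓ V :=
        (sup_sup_orthogonal_inf_orthogonal_inf (A := plusPart V) (B := mixedPart V)
          inf_le_left inf_le_left (plusPart_isOrtho_mixedPart V)).symm
    _ ≤ plusPart V ⊔ V ⊓ zeroPart V ⊔ mixedPart V := by
      rw [sup_right_comm]
      exact sup_le_sup_right (sup_le_sup_left hrest _) _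

theorem orthogonal_inf_zeroPart_inf_zeroPart_le (hV : IsClosed (V : Set W)) :
    (V ⊓ zeroPart V)ᗮ ⊓ zeroPart V ≤ Vᗮ := by
  conv_rhs => rw [← plusPart_sup_inf_zeroPart_sup_mixedPart hV, ← inf_orthogonal, ← inf_orthogonal]
  refine le_inf (le_inf (inf_le_right.trans (zeroPart_le_orthogonal_plusPart V)) inf_le_left) ?_
  exact inf_le_right.trans ((zeroPart_le_orthogonal_onePart V).trans
    (orthogonal_le (le_sup_left.trans (le_topologicalClosure _))))

theorem orthogonal_inf_zeroPart_inf_I_smul_eq_bot (hV : IsClosed (V : Set W)) :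
    (V ⊓ zeroPart V)ᗮ ⊓ zeroPart V ⊓ I • ((V ⊓ zeroPart V)ᗮ ⊓ zeroPart V) = ⊥ := by
  have h := orthogonal_inf_zeroPart_inf_zeroPart_le hV
  exact eq_bot_of_le_of_le_orthogonal (K := plusPart Vᗮ)
    (le_inf (inf_le_left.trans h) (inf_le_right.trans (I_smul_mono h)))
    (inf_le_left.trans (inf_le_right.trans (zeroPart_le_orthogonal_plusPart_orthogonal V)))

theorem orthogonal_inf_zeroPart_inf_I_smul_inf_zeroPart_eq_bot (hV : IsClosed (V : Set W)) :
    (V ⊓ zeroPart V)ᗮ ⊓ zeroPart V ⊓ I • (V ⊓ zeroPart V) = ⊥ :=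
  eq_bot_of_le_of_le_orthogonal (K := onePart V)
    ((le_inf (inf_le_right.trans (I_smul_mono inf_le_left))
      (inf_le_left.trans (orthogonal_inf_zeroPart_inf_zeroPart_le hV))).trans
      (I_smul_inf_orthogonal_le_onePart V))
    (inf_le_left.trans (inf_le_right.trans (zeroPart_le_orthogonal_onePart V)))

end CanonicalDecomposition

open CanonicalDecomposition

/-- Canonical decomposition of a closed real subspace `V` of a complex
Hilbert space `W`.  With `W₊ = V ∩ iV`, `W₋ = V^perp ∩ iV^perp`,
`W₁ = cl((V ∩ iV^perp) + (iV ∩ V^perp))` and `W₀ = (W₊ + W₋ + W₁)^perp`: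
(i) these are closed complex subspaces and `W` is their orthogonal direct sum;
(ii) `V = W₊ ⊕ V₀ ⊕ V₁` where `V₀ = V ∩ W₀`, `V₁ = V ∩ iV^perp`, and `V ∩ W₋ = {0}`;
(iii) `V₀` is in general position inside `W₀`. -/
theorem real_subspace_canonical_decomposition
    {W : Type*} [NormedAddCommGroup W] [InnerProductSpace ℂ W] [CompleteSpace W]
    (V : Submodule ℝ W) (hV : IsClosed (V : Set W)) :
    let Wp : Set W := (V : Set W) ∩ iSet (V : Set W)
    let Wm : Set W := realPerp (V : Set W) ∩ realPerp (iSet (V : Set W))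
    let Wone : Set W := closure {z : W |
      ∃ a ∈ (V : Set W) ∩ iSet (realPerp (V : Set W)),
      ∃ b ∈ iSet (V : Set W) ∩ realPerp (V : Set W), z = a + b}
    let Wzero : Set W := realPerp (Wp ∪ Wm ∪ Wone)
    let F : Fin 4 → Set W := ![Wp, Wzero, Wone, Wm]
    let V0 : Set W := (V : Set W) ∩ Wzero
    let V1 : Set W := (V : Set W) ∩ iSet (realPerp (V : Set W))
    let rp0 : Set W := realPerp V0 ∩ Wzero
    -- (i) closed complex subspaces, orthogonal, spanning
    (∀ i : Fin 4, IsClosed (F i) ∧ ∃ Z : Submodule ℂ W, (Z : Set W) = F i) ∧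
    (∀ i j : Fin 4, i ≠ j → ∀ x ∈ F i, ∀ y ∈ F j, (inner ℂ x y : ℂ) = 0) ∧
    (∀ w : W, ∃ a ∈ F 0, ∃ b ∈ F 1, ∃ c ∈ F 2, ∃ d ∈ F 3, w = a + b + c + d) ∧
    -- (ii) the decomposition of V
    (∀ v ∈ (V : Set W), ∃ a ∈ Wp, ∃ b ∈ V0, ∃ c ∈ V1, v = a + b + c) ∧
    (∀ a ∈ Wp, ∀ b ∈ V0, ∀ c ∈ V1, a + b + c ∈ (V : Set W)) ∧
    ((V : Set W) ∩ Wm = {0}) ∧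
    -- (iii) V₀ is in general position inside W₀
    (V0 ∩ iSet V0 = {0}) ∧ (rp0 ∩ iSet rp0 = {0}) ∧ (rp0 ∩ iSet V0 = {0}) := by
  intro Wp Wm Wone Wzero F V0 V1 rp0
  let : InnerProductSpace ℝ W := InnerProductSpace.complexToReal
  have hWm : Wm = plusPart Vᗮ := by
    change ((Vᗮ ⊓ (I • V)ᗮ : Submodule ℝ W) : Set W) = _
    rw [orthogonal_I_smul]
    rfl
  have hWone : Wone = onePart V := closure_setOf_add_eq (mixedPart V) (I • V ⊓ Vᗮ)
  have hWzero : Wzero = zeroPart V := by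
    simp only [Wzero, realPerp_union, hWm, hWone]
    rfl
  have hF : F = fun i => (part V i : Set W) := by
    funext i
    fin_cases i
    exacts [rfl, hWzero, hWone, hWm]
  have hV0 : V0 = (V ⊓ zeroPart V : Submodule ℝ W) := by simp only [V0, hWzero]; rfl
  have hrp0 : rp0 = ((V ⊓ zeroPart V)ᗮ ⊓ zeroPart V : Submodule ℝ W) := by
    simp only [rp0, hV0, hWzero]; rfl
  rw [hF, hV0, hrp0, hWm]
  refine ⟨fun i => ⟨isClosed_part hV i, (isComplexSubspace_part V i).exists_submodule_coe_eq⟩,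
    fun i j hij x hx y hy =>
      (isComplexSubspace_part V i).inner_eq_zero (pairwise_isOrtho_part V hij) hx hy,
    fun w => exists_add_add_add_of_mem_sup_sup_sup
      ((plusPart_sup_zeroPart_sup_onePart_sup hV).symm ▸ mem_top),
    fun v hv => exists_add_add_of_mem_sup_sup
      ((plusPart_sup_inf_zeroPart_sup_mixedPart hV).symm ▸ hv),
    fun a ha b hb c hc => V.add_mem (V.add_mem ha.1 hb.1) hc.1,
    congrArg SetLike.coe (inf_plusPart_orthogonal_eq_bot V),
    congrArg SetLike.coe (inf_zeroPart_inf_I_smul_eq_bot V),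
    congrArg SetLike.coe (orthogonal_inf_zeroPart_inf_I_smul_eq_bot hV),
    congrArg SetLike.coe (orthogonal_inf_zeroPart_inf_I_smul_inf_zeroPart_eq_bot hV)⟩
end
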